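/- arXiv:2310.09542 — 2 statements merged into one kernel-verified Lean document; each statement's English description precedes it below -/
import Mathlib

section
/- Let S1 = (U1,σ1) and S2 = (U2,σ2) be disjoint structures, and let u1 ∈ supp(σ1), u2 ∈ supp(σ2) be elements whose colors are disjoint, i.e., col_{S1}(u1) ∩ col_{S2}(u2) = ∅. Then the equivalence relation on U1 ∪ U2 generated by the single pair (u1, u2) is compatible with the composition S1 • S2. -/
/-!
Common definitions for the formalization of
"The Treewidth Boundedness Problem for an Inductive Separation Logic of Relations".
-/

namespace SLRTW

/-! ### Relational structures over a fixed universe `V` -/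

/-- A structure over the relational signature given by `Rel`, `ar` with universe `V`:
each relation symbol is interpreted as a finite set of tuples, and only finitely many
relation symbols have a nonempty interpretation. -/
structure Str (Rel : Type) (ar : Rel → ℕ) (V : Type) where
  interp : ∀ r : Rel, Set (Fin (ar r) → V)
  finite_interp : ∀ r, (interp r).Finite
  finite_active : {r : Rel | interp r ≠ ∅}.Finite

/-- Formulas of the separation logic of relations, over relation symbols `Rel` (with
arities `ar`) and predicate symbols `Pr` (with arities `pa`).  Variables are natural
numbers; by convention, the parameters of a predicate of arity `n` are `0, …, n-1`. -/
inductive SLR (Rel : Type) (ar : Rel → ℕ) (Pr : Type) (pa : Pr → ℕ) : Type where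
  | emp : SLR Rel ar Pr pa
  | eq (x y : ℕ) : SLR Rel ar Pr pa
  | ne (x y : ℕ) : SLR Rel ar Pr pa
  | rel (r : Rel) (a : Fin (ar r) → ℕ) : SLR Rel ar Pr pa
  | pred (A : Pr) (a : Fin (pa A) → ℕ) : SLR Rel ar Pr pa
  | star (φ ψ : SLR Rel ar Pr pa) : SLR Rel ar Pr pa
  | ex (x : ℕ) (φ : SLR Rel ar Pr pa) : SLR Rel ar Pr pa

/-- An RGB color scheme: a partition of the set of colors `𝒫(Rel)` into red, green
and blue colors, such that any two blue colors intersect, every green color intersects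
every blue color, and every red color is disjoint from some blue color. -/
structure RGB (Rel : Type) where
  red : Set (Set Rel)
  green : Set (Set Rel)
  blue : Set (Set Rel)
  cover : ∀ C : Set Rel, C ∈ red ∨ C ∈ green ∨ C ∈ blue
  red_green : red ∩ green = ∅
  red_blue : red ∩ blue = ∅
  green_blue : green ∩ blue = ∅
  blue_blue_meet : ∀ C1 ∈ blue, ∀ C2 ∈ blue, (C1 ∩ C2).Nonempty
  green_blue_meet : ∀ C1 ∈ green, ∀ C2 ∈ blue, (C1 ∩ C2).Nonempty
  red_sep : ∀ C1 ∈ red, ∃ C2 ∈ blue, C1 ∩ C2 = ∅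

section Defs1

variable {Rel : Type} {ar : Rel → ℕ} {V : Type} {Pr : Type} {pa : Pr → ℕ}

/-- The support of a structure: the elements occurring in some tuple. -/
def Str.supp (S : Str Rel ar V) : Set V :=
  { u | ∃ (r : Rel) (t : Fin (ar r) → V), t ∈ S.interp r ∧ ∃ i, t i = u }

/-- Two structures are locally disjoint iff their interpretations are pointwise disjoint. -/
def LocDisj (S1 S2 : Str Rel ar V) : Prop :=
  ∀ r, S1.interp r ∩ S2.interp r = ∅

/-- Composition of structures (pointwise union of the interpretations). -/
def Str.comp (S1 S2 : Str Rel ar V) : Str Rel ar V where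
  interp r := S1.interp r ∪ S2.interp r
  finite_interp r := (S1.finite_interp r).union (S2.finite_interp r)
  finite_active := by
    refine (S1.finite_active.union S2.finite_active).subset ?_
    intro r hr
    simp only [Set.mem_setOf_eq, Set.mem_union, ne_eq] at hr ⊢
    rw [Set.union_empty_iff] at hr
    tauto

/-- Composition of a finite family of structures. -/
def bigComp {n : ℕ} (Ss : Fin n → Str Rel ar V) : Str Rel ar V where
  interp r := ⋃ i, (Ss i).interp r
  finite_interp r := Set.finite_iUnion fun i => (Ss i).finite_interp r
  finite_active := by
    refine (Set.finite_iUnion fun i => (Ss i).finite_active).subset ?_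
    intro r hr
    simp only [Set.mem_setOf_eq, ne_eq, Set.iUnion_eq_empty, Set.mem_iUnion] at hr ⊢
    push_neg at hr
    obtain ⟨i, hi⟩ := hr
    exact ⟨i, Set.nonempty_iff_ne_empty.mp hi⟩

/-- A tree decomposition of a structure: a finite tree whose nodes carry finite bags of
elements, covering every tuple, and such that the set of nodes containing any given
support element is nonempty and connected. -/
structure TreeDecomp (S : Str Rel ar V) where
  ι : Type
  instFin : Fintype ι
  G : SimpleGraph ι
  isTree : G.IsTree
  bag : ι → Finset V
  bag_cover : ∀ (r : Rel), ∀ t ∈ S.interp r, ∃ n : ι, ∀ i, t i ∈ bag n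
  bag_conn : ∀ u ∈ S.supp, (SimpleGraph.induce {n : ι | u ∈ bag n} G).Connected

attribute [instance] TreeDecomp.instFin

/-- The width of a tree decomposition: maximal bag size minus one. -/
def TreeDecomp.width {S : Str Rel ar V} (T : TreeDecomp S) : ℕ :=
  (Finset.univ.sup fun n : T.ι => (T.bag n).card) - 1

/-- The treewidth of a structure: the minimal width of a tree decomposition. -/
noncomputable def tw (S : Str Rel ar V) : ℕ :=
  sInf { w | ∃ T : TreeDecomp S, T.width = w }

/-- A set of structures is treewidth-bounded iff the treewidths of its members are
bounded. -/
def TWB (𝒮 : Set (Str Rel ar V)) : Prop :=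
  ∃ k : ℕ, ∀ S ∈ 𝒮, tw S ≤ k

/-- The supremum of the treewidths of a set of structures (in `ℕ∞`). -/
noncomputable def twSet (𝒮 : Set (Str Rel ar V)) : ℕ∞ :=
  ⨆ S ∈ 𝒮, (tw S : ℕ∞)

namespace SLR

/-- Free variables of a formula. -/
def fv : SLR Rel ar Pr pa → Set ℕ
  | .emp => ∅
  | .eq x y => {x, y}
  | .ne x y => {x, y}
  | .rel _ a => Set.range a
  | .pred _ a => Set.range a
  | .star φ ψ => φ.fv ∪ ψ.fv
  | .ex x φ => φ.fv \ {x}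

/-- All variables (free or bound) occurring in a formula. -/
def vars : SLR Rel ar Pr pa → Set ℕ
  | .emp => ∅
  | .eq x y => {x, y}
  | .ne x y => {x, y}
  | .rel _ a => Set.range a
  | .pred _ a => Set.range a
  | .star φ ψ => φ.vars ∪ ψ.vars
  | .ex x φ => insert x φ.vars

/-- Predicate-free formulas. -/
def PredFree : SLR Rel ar Pr pa → Prop
  | .pred _ _ => False
  | .star φ ψ => φ.PredFree ∧ ψ.PredFree
  | .ex _ φ => φ.PredFree
  | _ => True

/-- Quantifier- and predicate-free (qpf) formulas. -/
def QPF : SLR Rel ar Pr pa → Prop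
  | .pred _ _ => False
  | .ex _ _ => False
  | .star φ ψ => φ.QPF ∧ ψ.QPF
  | _ => True

/-- Formulas containing only relation atoms. -/
def RelOnly : SLR Rel ar Pr pa → Prop
  | .rel _ _ => True
  | .star φ ψ => φ.RelOnly ∧ ψ.RelOnly
  | _ => False

/-- Formulas containing only equality atoms (and `emp`). -/
def EqOnly : SLR Rel ar Pr pa → Prop
  | .emp => True
  | .eq _ _ => True
  | .star φ ψ => φ.EqOnly ∧ ψ.EqOnly
  | _ => False

/-- Equality-free formulas: no equality atom and no predicate atom in which the same
variable occurs twice. -/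
def EqFreeF : SLR Rel ar Pr pa → Prop
  | .eq _ _ => False
  | .pred _ a => Function.Injective a
  | .star φ ψ => φ.EqFreeF ∧ ψ.EqFreeF
  | .ex _ φ => φ.EqFreeF
  | _ => True

/-- The number of predicate atoms occurring in a formula. -/
def npred : SLR Rel ar Pr pa → ℕ
  | .pred _ _ => 1
  | .star φ ψ => φ.npred + ψ.npred
  | .ex _ φ => φ.npred
  | _ => 0

/-- The number of relation atoms occurring in a formula. -/
def nrel : SLR Rel ar Pr pa → ℕ
  | .rel _ _ => 1
  | .star φ ψ => φ.nrel + ψ.nrel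
  | .ex _ φ => φ.nrel
  | _ => 0

/-- The set of relation symbols occurring in a formula. -/
def rels : SLR Rel ar Pr pa → Set Rel
  | .rel r _ => {r}
  | .star φ ψ => φ.rels ∪ ψ.rels
  | .ex _ φ => φ.rels
  | _ => ∅

/-- The set of predicate symbols occurring in a formula. -/
def preds : SLR Rel ar Pr pa → Set Pr
  | .pred A _ => {A}
  | .star φ ψ => φ.preds ∪ ψ.preds
  | .ex _ φ => φ.preds
  | _ => ∅

/-- The quantifier-free matrix of a formula (erasing all existential quantifiers). -/
def matrix : SLR Rel ar Pr pa → SLR Rel ar Pr pa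
  | .ex _ φ => φ.matrix
  | .star φ ψ => .star φ.matrix ψ.matrix
  | φ => φ

/-- The list of bound variables of a formula. -/
def binders : SLR Rel ar Pr pa → List ℕ
  | .ex x φ => x :: φ.binders
  | .star φ ψ => φ.binders ++ ψ.binders
  | _ => []

/-- A formula is well-named iff its bound variables are pairwise distinct and distinct
from its free variables.  For a well-named formula, the matrix faithfully represents
the prenex form. -/
def WellNamed (χ : SLR Rel ar Pr pa) : Prop :=
  χ.binders.Nodup ∧ ∀ x ∈ χ.binders, x ∉ χ.fv

/-- The disequality `x ≠ y` occurs in the formula (as an unordered pair). -/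
def neOccurs : SLR Rel ar Pr pa → ℕ → ℕ → Prop
  | .ne a b, x, y => (a = x ∧ b = y) ∨ (a = y ∧ b = x)
  | .star φ ψ, x, y => φ.neOccurs x y ∨ ψ.neOccurs x y
  | .ex _ φ, x, y => φ.neOccurs x y
  | _, _, _ => False

/-- The equality `x = y` occurs in the formula (as an unordered pair). -/
def eqOccurs : SLR Rel ar Pr pa → ℕ → ℕ → Prop
  | .eq a b, x, y => (a = x ∧ b = y) ∨ (a = y ∧ b = x)
  | .star φ ψ, x, y => φ.eqOccurs x y ∨ ψ.eqOccurs x y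
  | .ex _ φ, x, y => φ.eqOccurs x y
  | _, _, _ => False

end SLR

/-- The nullary predicate atom `A()` (the arguments are irrelevant when `pa A = 0`). -/
def natom (A : Pr) : SLR Rel ar Pr pa := .pred A fun _ => 0

/-- Iterated separating conjunction: `starAll φ [χ1, …, χn] = χ1 * (χ2 * … * (χn * φ))`. -/
def starAll (φ : SLR Rel ar Pr pa) : List (SLR Rel ar Pr pa) → SLR Rel ar Pr pa
  | [] => φ
  | χ :: l => .star χ (starAll φ l)

end Defs1

/-- A set of inductive definitions (SID): a finite set of rules `A(0,…,pa A - 1) ← φ`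
where the free variables of `φ` are among the parameters `0, …, pa A - 1`. -/
structure SID (Rel : Type) (ar : Rel → ℕ) (Pr : Type) (pa : Pr → ℕ) where
  rules : Pr → Set (SLR Rel ar Pr pa)
  finite_rules : {p : Pr × SLR Rel ar Pr pa | p.2 ∈ rules p.1}.Finite
  wf : ∀ A, ∀ φ ∈ rules A, SLR.fv φ ⊆ {x | x < pa A}

section Defs2

variable {Rel : Type} {ar : Rel → ℕ} {V : Type} {Pr : Type} {pa : Pr → ℕ}

/-- The empty structure predicate. -/
def EmpS (S : Str Rel ar V) : Prop := ∀ r, S.interp r = ∅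

/-- The satisfaction relation of SLR, parameterized by a store and an SID.
A predicate atom `A(y₁,…,yₙ)` is satisfied iff the body of some rule for `A` is
satisfied under the store mapping the parameter `i` to the value of `yᵢ₊₁`. -/
inductive Sat (Δ : SID Rel ar Pr pa) :
    Str Rel ar V → (ℕ → V) → SLR Rel ar Pr pa → Prop where
  | emp {S : Str Rel ar V} {s : ℕ → V} : EmpS S → Sat Δ S s .emp
  | eq {S : Str Rel ar V} {s : ℕ → V} {x y : ℕ} :
      EmpS S → s x = s y → Sat Δ S s (.eq x y)
  | ne {S : Str Rel ar V} {s : ℕ → V} {x y : ℕ} :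
      EmpS S → s x ≠ s y → Sat Δ S s (.ne x y)
  | rel {S : Str Rel ar V} {s : ℕ → V} {r : Rel} {a : Fin (ar r) → ℕ} :
      S.interp r = {fun i => s (a i)} → (∀ r', r' ≠ r → S.interp r' = ∅) →
      Sat Δ S s (.rel r a)
  | pred {S : Str Rel ar V} {s : ℕ → V} {A : Pr} {a : Fin (pa A) → ℕ}
      {body : SLR Rel ar Pr pa} :
      body ∈ Δ.rules A →
      Sat Δ S (fun n => if h : n < pa A then s (a ⟨n, h⟩) else s n) body →
      Sat Δ S s (.pred A a)
  | star {S1 S2 : Str Rel ar V} {s : ℕ → V} {φ ψ : SLR Rel ar Pr pa} :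
      LocDisj S1 S2 → Sat Δ S1 s φ → Sat Δ S2 s ψ →
      Sat Δ (S1.comp S2) s (.star φ ψ)
  | ex {S : Str Rel ar V} {s : ℕ → V} {x : ℕ} {φ : SLR Rel ar Pr pa} (u : V) :
      Sat Δ S (Function.update s x u) φ → Sat Δ S s (.ex x φ)

/-- The set of `Δ`-models of a sentence (over universe `V`). -/
def SMod (Δ : SID Rel ar Pr pa) (φ : SLR Rel ar Pr pa) : Set (Str Rel ar V) :=
  { S | ∃ s : ℕ → V, Sat Δ S s φ }

/-- `IsSubst f φ φ'` holds iff `φ'` is obtained from `φ` by the capture-avoiding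
substitution of `f x` for each free variable `x`, the bound variables being renamed
to avoid clashes. -/
inductive IsSubst : (ℕ → ℕ) → SLR Rel ar Pr pa → SLR Rel ar Pr pa → Prop where
  | emp {f : ℕ → ℕ} : IsSubst f .emp .emp
  | eq {f : ℕ → ℕ} {x y : ℕ} : IsSubst f (.eq x y) (.eq (f x) (f y))
  | ne {f : ℕ → ℕ} {x y : ℕ} : IsSubst f (.ne x y) (.ne (f x) (f y))
  | rel {f : ℕ → ℕ} {r : Rel} {a : Fin (ar r) → ℕ} :
      IsSubst f (.rel r a) (.rel r (f ∘ a))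
  | pred {f : ℕ → ℕ} {A : Pr} {a : Fin (pa A) → ℕ} :
      IsSubst f (.pred A a) (.pred A (f ∘ a))
  | star {f : ℕ → ℕ} {φ ψ φ' ψ' : SLR Rel ar Pr pa} :
      IsSubst f φ φ' → IsSubst f ψ ψ' → IsSubst f (.star φ ψ) (.star φ' ψ')
  | ex {f : ℕ → ℕ} {x z : ℕ} {φ φ' : SLR Rel ar Pr pa} :
      (∀ y ∈ SLR.fv φ, y ≠ x → f y ≠ z) →
      IsSubst (Function.update f x z) φ φ' →
      IsSubst f (.ex x φ) (.ex z φ')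

/-- One unfolding step: replace one predicate atom `A(y₁,…,yₙ)` by the body of a rule
for `A`, with the parameters substituted by `y₁,…,yₙ` (bound variables renamed to
avoid clashes). -/
inductive Step (Δ : SID Rel ar Pr pa) : SLR Rel ar Pr pa → SLR Rel ar Pr pa → Prop where
  | unfold {A : Pr} {a : Fin (pa A) → ℕ} {body ψ : SLR Rel ar Pr pa} :
      body ∈ Δ.rules A →
      IsSubst (fun n => if h : n < pa A then a ⟨n, h⟩ else n) body ψ →
      Step Δ (.pred A a) ψ
  | starL {φ φ' ψ : SLR Rel ar Pr pa} : Step Δ φ φ' → Step Δ (.star φ ψ) (.star φ' ψ)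
  | starR {φ ψ ψ' : SLR Rel ar Pr pa} : Step Δ ψ ψ' → Step Δ (.star φ ψ) (.star φ ψ')
  | exC {x : ℕ} {φ φ' : SLR Rel ar Pr pa} : Step Δ φ φ' → Step Δ (.ex x φ) (.ex x φ')

/-- `Δ`-unfolding: the reflexive-transitive closure of unfolding steps. -/
def Unfolds (Δ : SID Rel ar Pr pa) : SLR Rel ar Pr pa → SLR Rel ar Pr pa → Prop :=
  Relation.ReflTransGen (Step Δ)

/-- `x = y` is a logical consequence of `ψ`. -/
def EqConseq (Δ : SID Rel ar Pr pa) (ψ : SLR Rel ar Pr pa) (x y : ℕ) : Prop :=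
  ∀ (S : Str Rel ar V) (s : ℕ → V), Sat Δ S s ψ → s x = s y

/-- A store is canonical for `ψ` iff it identifies only variables that are equated as a
logical consequence of `ψ`. -/
def CanonicalStore (Δ : SID Rel ar Pr pa) (s : ℕ → V) (ψ : SLR Rel ar Pr pa) : Prop :=
  ∀ x ∈ ψ.fv, ∀ y ∈ ψ.fv, s x = s y → EqConseq (V := V) Δ ψ x y

/-- `(S, d)` is a rich canonical `Δ`-model of `φ`: for some complete `Δ`-unfolding of
`φ` into a well-named predicate-free formula `χ` (i.e. of the form `∃x⃗.ψ` with `ψ` qpf,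
up to hoisting of quantifiers) and some store canonical for the matrix `ψ`, the
structure `S` satisfies `ψ` and `d` records the disequalities of `ψ` under the store. -/
def RichCanonical (Δ : SID Rel ar Pr pa) (φ : SLR Rel ar Pr pa)
    (S : Str Rel ar V) (d : V → V → Prop) : Prop :=
  ∃ χ : SLR Rel ar Pr pa, Unfolds Δ φ χ ∧ χ.PredFree ∧ χ.WellNamed ∧
    ∃ s : ℕ → V, CanonicalStore Δ s χ.matrix ∧ Sat Δ S s χ.matrix ∧
      ∀ u v : V, d u v ↔ ∃ x y : ℕ, s x = u ∧ s y = v ∧ χ.matrix.neOccurs x y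

/-- The set of canonical `Δ`-models of `φ`. -/
def Canonical (Δ : SID Rel ar Pr pa) (φ : SLR Rel ar Pr pa) : Set (Str Rel ar V) :=
  { S | ∃ d, RichCanonical Δ φ S d }

/-- `S1` is a substructure of `S2`: its interpretation consists exactly of the tuples of
`S2` all of whose elements belong to the support of `S1`. -/
def Substr (S1 S2 : Str Rel ar V) : Prop :=
  ∀ r, S1.interp r = { t ∈ S2.interp r | ∀ i, t i ∈ S1.supp }

/-- Two elements touch iff they occur in a common tuple. -/
def Touching (S : Str Rel ar V) (u v : V) : Prop :=
  ∃ (r : Rel) (t : Fin (ar r) → V), t ∈ S.interp r ∧ (∃ i, t i = u) ∧ ∃ j, t j = v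

/-- A structure is connected iff any two support elements are joined by a path of
pairwise overlapping tuples. -/
def ConnectedS (S : Str Rel ar V) : Prop :=
  ∀ u ∈ S.supp, ∀ v ∈ S.supp, Relation.ReflTransGen (Touching S) u v

/-- `S1` is a maximally connected substructure of `S2`. -/
def MaxConn (S1 S2 : Str Rel ar V) : Prop :=
  Substr S1 S2 ∧ ConnectedS S1 ∧
    ∀ S1' : Str Rel ar V, Substr S1' S2 → ConnectedS S1' → Substr S1 S1' → S1 = S1'

/-- The set of maximally connected substructures of a structure. -/
def split (S : Str Rel ar V) : Set (Str Rel ar V) := { S' | MaxConn S' S }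

/-- `split`, lifted to sets of structures. -/
def splitSet (𝒮 : Set (Str Rel ar V)) : Set (Str Rel ar V) := ⋃ S ∈ 𝒮, split S

/-- The smallest equivalence relation containing `R`. -/
def EqvOf (R : V → V → Prop) (a b : V) : Prop :=
  ∀ E : V → V → Prop, Equivalence E → (∀ x y, R x y → E x y) → E a b

/-- An equivalence relation is compatible with a structure iff any two distinct tuples of
the interpretation of a relation symbol differ at some position modulo the relation. -/
def CompatibleE (S : Str Rel ar V) (E : V → V → Prop) : Prop :=
  ∀ r, ∀ t1 ∈ S.interp r, ∀ t2 ∈ S.interp r, t1 ≠ t2 → ∃ i, ¬ E (t1 i) (t2 i)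

/-- The image of a structure under a map on elements. -/
def mapStr (h : V → V) (S : Str Rel ar V) : Str Rel ar V where
  interp r := (fun t => h ∘ t) '' S.interp r
  finite_interp r := (S.finite_interp r).image _
  finite_active := by
    refine S.finite_active.subset ?_
    intro r hr
    simp only [Set.mem_setOf_eq, ne_eq] at hr ⊢
    intro h0
    exact hr (by rw [h0, Set.image_empty])

/-- `S'` is (a copy over `V` of) the quotient of `S` by the equivalence relation `E`. -/
def QuotBy (S : Str Rel ar V) (E : V → V → Prop) (S' : Str Rel ar V) : Prop :=
  ∃ h : V → V, (∀ u ∈ S.supp, ∀ v ∈ S.supp, (E u v ↔ h u = h v)) ∧ S' = mapStr h S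

/-- `S'` is an isomorphic copy of `S` (over the same universe `V`). -/
def IsoCopy (S S' : Str Rel ar V) : Prop :=
  ∃ h : V → V, Set.InjOn h S.supp ∧ S' = mapStr h S

/-- A matching: a set of pairs such that distinct pairs share no element. -/
def IsMatching (M : Set (V × V)) : Prop :=
  ∀ p ∈ M, ∀ q ∈ M, p ≠ q → ({p.1, p.2} ∩ {q.1, q.2} : Set V) = ∅

/-- The set of internal fusions of a structure: quotients by compatible equivalence
relations (up to isomorphism). -/
def IntFusion (S : Str Rel ar V) : Set (Str Rel ar V) :=
  { S' | ∃ E : V → V → Prop, Equivalence E ∧ CompatibleE S E ∧ QuotBy S E S' }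

/-- Internal fusions of members of a set of structures. -/
def ifSet (𝒮 : Set (Str Rel ar V)) : Set (Str Rel ar V) := ⋃ S ∈ 𝒮, IntFusion S

/-- Internal fusions of a rich canonical model: quotients by compatible equivalence
relations that do not violate the disequality relation `d`. -/
def SIntFusion (S : Str Rel ar V) (d : V → V → Prop) : Set (Str Rel ar V) :=
  { S' | ∃ E : V → V → Prop, Equivalence E ∧ CompatibleE S E ∧
      (∀ u v, d u v → ¬ E u v) ∧ QuotBy S E S' }

/-- External fusions of two structures: quotients of the composition of disjoint
isomorphic copies by the smallest equivalence relation containing a nonempty matching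
between supports that is compatible with the composition. -/
def ExtFusion (S1 S2 : Str Rel ar V) : Set (Str Rel ar V) :=
  { S' | ∃ (S1' S2' : Str Rel ar V) (M : Set (V × V)),
      IsoCopy S1 S1' ∧ IsoCopy S2 S2' ∧ S1'.supp ∩ S2'.supp = ∅ ∧
      M.Nonempty ∧ IsMatching M ∧ (∀ p ∈ M, p.1 ∈ S1'.supp ∧ p.2 ∈ S2'.supp) ∧
      CompatibleE (S1'.comp S2') (EqvOf fun a b => (a, b) ∈ M) ∧
      QuotBy (S1'.comp S2') (EqvOf fun a b => (a, b) ∈ M) S' }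

/-- Single-pair external fusions: external fusions whose matching is a single pair. -/
def ExtFusion1 (S1 S2 : Str Rel ar V) : Set (Str Rel ar V) :=
  { S' | ∃ (S1' S2' : Str Rel ar V) (M : Set (V × V)),
      IsoCopy S1 S1' ∧ IsoCopy S2 S2' ∧ S1'.supp ∩ S2'.supp = ∅ ∧
      (∃ p : V × V, M = {p}) ∧ IsMatching M ∧
      (∀ p ∈ M, p.1 ∈ S1'.supp ∧ p.2 ∈ S2'.supp) ∧
      CompatibleE (S1'.comp S2') (EqvOf fun a b => (a, b) ∈ M) ∧
      QuotBy (S1'.comp S2') (EqvOf fun a b => (a, b) ∈ M) S' }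

/-- Closure of a set of structures under external fusions (structures being identified
up to isomorphism). -/
inductive efStar (𝒮 : Set (Str Rel ar V)) : Str Rel ar V → Prop where
  | base {S : Str Rel ar V} : S ∈ 𝒮 → efStar 𝒮 S
  | iso {S S' : Str Rel ar V} : efStar 𝒮 S → IsoCopy S S' → efStar 𝒮 S'
  | fuse {S1 S2 S : Str Rel ar V} :
      efStar 𝒮 S1 → efStar 𝒮 S2 → S ∈ ExtFusion S1 S2 → efStar 𝒮 S

def efStarSet (𝒮 : Set (Str Rel ar V)) : Set (Str Rel ar V) := { S | efStar 𝒮 S }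

/-- Closure of a set of structures under single-pair external fusions. -/
inductive ef1Star (𝒮 : Set (Str Rel ar V)) : Str Rel ar V → Prop where
  | base {S : Str Rel ar V} : S ∈ 𝒮 → ef1Star 𝒮 S
  | iso {S S' : Str Rel ar V} : ef1Star 𝒮 S → IsoCopy S S' → ef1Star 𝒮 S'
  | fuse {S1 S2 S : Str Rel ar V} :
      ef1Star 𝒮 S1 → ef1Star 𝒮 S2 → S ∈ ExtFusion1 S1 S2 → ef1Star 𝒮 S

def ef1StarSet (𝒮 : Set (Str Rel ar V)) : Set (Str Rel ar V) := { S | ef1Star 𝒮 S }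

/-- Closure of a set of structures under both internal and external fusions. -/
inductive iefStar (𝒮 : Set (Str Rel ar V)) : Str Rel ar V → Prop where
  | base {S : Str Rel ar V} : S ∈ 𝒮 → iefStar 𝒮 S
  | iso {S S' : Str Rel ar V} : iefStar 𝒮 S → IsoCopy S S' → iefStar 𝒮 S'
  | fuse {S1 S2 S : Str Rel ar V} :
      iefStar 𝒮 S1 → iefStar 𝒮 S2 → S ∈ ExtFusion S1 S2 → iefStar 𝒮 S
  | intf {S1 S : Str Rel ar V} : iefStar 𝒮 S1 → S ∈ IntFusion S1 → iefStar 𝒮 S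

def iefStarSet (𝒮 : Set (Str Rel ar V)) : Set (Str Rel ar V) := { S | iefStar 𝒮 S }

/-- The color of an element: the set of relation symbols whose interpretation contains
the constant tuple at this element. -/
def color (S : Str Rel ar V) (u : V) : Set Rel :=
  { r : Rel | (fun _ => u) ∈ S.interp r }

/-- The multiplicity of a color in the multiset color abstraction of a structure. -/
noncomputable def colorMult (S : Str Rel ar V) (C : Set Rel) : ℕ :=
  {u ∈ S.supp | color S u = C}.ncard

/-- The `k`-multiset color abstraction of a structure: the sub-multisets of cardinality
at most `k` of the multiset of colors of its support elements. -/
noncomputable def MkOf (k : ℕ) (S : Str Rel ar V) : Set (Multiset (Set Rel)) :=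
  { M | Multiset.card M ≤ k ∧
      ∀ C : Set Rel, @Multiset.count _ (Classical.decEq _) C M ≤ colorMult S C }

/-- The `k`-multiset color abstraction, lifted to sets of structures. -/
noncomputable def MkSet (k : ℕ) (𝒮 : Set (Str Rel ar V)) : Set (Multiset (Set Rel)) :=
  ⋃ S ∈ 𝒮, MkOf k S

/-- A set of structures conforms to an RGB color scheme iff (1) in any member, if some
support element has a red color then all other support elements have blue colors, and
(2) in any external fusion of members, every green color occurs at most twice. -/
def Conforms (𝒮 : Set (Str Rel ar V)) (P : RGB Rel) : Prop :=
  (∀ S ∈ 𝒮, ∀ u ∈ S.supp, color S u ∈ P.red →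
      ∀ v ∈ S.supp, v ≠ u → color S v ∈ P.blue) ∧
  (∀ S ∈ efStarSet 𝒮, ∀ C ∈ P.green, colorMult S C ≤ 2)

/-- Type `R` structures: only blue and red colors, with exactly one red element. -/
def TypeR (P : RGB Rel) (S : Str Rel ar V) : Prop :=
  (∀ u ∈ S.supp, color S u ∈ P.blue ∨ color S u ∈ P.red) ∧
  {u ∈ S.supp | color S u ∈ P.red}.ncard = 1

/-- Type `G` structures: only blue and green colors, with at least one green element. -/
def TypeG (P : RGB Rel) (S : Str Rel ar V) : Prop :=
  (∀ u ∈ S.supp, color S u ∈ P.blue ∨ color S u ∈ P.green) ∧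
  {u ∈ S.supp | color S u ∈ P.green}.Nonempty

/-- Type `B` structures: only blue colors. -/
def TypeB (P : RGB Rel) (S : Str Rel ar V) : Prop :=
  ∀ u ∈ S.supp, color S u ∈ P.blue

namespace SID

/-- The set of predicate symbols occurring in an SID. -/
def predsOf (Δ : SID Rel ar Pr pa) : Set Pr :=
  {A | Δ.rules A ≠ ∅} ∪ ⋃ A, ⋃ φ ∈ Δ.rules A, SLR.preds φ

/-- The set of relation symbols occurring in an SID. -/
def relsOf (Δ : SID Rel ar Pr pa) : Set Rel :=
  ⋃ A, ⋃ φ ∈ Δ.rules A, SLR.rels φ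

/-- The number of predicate symbols occurring in an SID. -/
noncomputable def Pcount (Δ : SID Rel ar Pr pa) : ℕ := Δ.predsOf.ncard

/-- The number of relation symbols occurring in an SID. -/
noncomputable def Rcount (Δ : SID Rel ar Pr pa) : ℕ := Δ.relsOf.ncard

/-- The maximum number of variables (free or existentially quantified) occurring in a
rule of the SID. -/
noncomputable def maxvar (Δ : SID Rel ar Pr pa) : ℕ :=
  sSup { n | ∃ A, ∃ φ ∈ Δ.rules A, n = ({x | x < pa A} ∪ SLR.vars φ).ncard }

/-- The maximum number of predicate atoms occurring in a rule of the SID. -/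
noncomputable def maxpredatoms (Δ : SID Rel ar Pr pa) : ℕ :=
  sSup { n | ∃ A, ∃ φ ∈ Δ.rules A, n = SLR.npred φ }

/-- The maximum number of relation atoms occurring in a rule of the SID. -/
noncomputable def maxrelatoms (Δ : SID Rel ar Pr pa) : ℕ :=
  sSup { n | ∃ A, ∃ φ ∈ Δ.rules A, n = SLR.nrel φ }

/-- The maximum arity of a relation symbol occurring in the SID. -/
noncomputable def maxrelarity (Δ : SID Rel ar Pr pa) : ℕ :=
  sSup { n | ∃ r ∈ Δ.relsOf, n = ar r }

/-- The maximum arity of a predicate symbol occurring in the SID. -/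
noncomputable def maxpredarity (Δ : SID Rel ar Pr pa) : ℕ :=
  sSup { n | ∃ A ∈ Δ.predsOf, n = pa A }

/-- An SID is equality-free iff all its rules are equality-free. -/
def EqFree (Δ : SID Rel ar Pr pa) : Prop :=
  ∀ A, ∀ φ ∈ Δ.rules A, SLR.EqFreeF φ

end SID

/-- An SID is all-satisfiable for a nullary predicate `A` iff every predicate-free
outcome of a complete unfolding of `A` is satisfiable. -/
def AllSat (Δ : SID Rel ar Pr pa) (A : Pr) : Prop :=
  ∀ χ : SLR Rel ar Pr pa, Unfolds Δ (natom A) χ → χ.PredFree →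
    ∃ (S : Str Rel ar V) (s : ℕ → V), Sat Δ S s χ

/-- An SID is expandable for a nullary predicate `A`: any finite family of pairwise
disjoint canonical models embeds, as a substructure, into a rich canonical model, in a
way that neither disequalities nor overlapping tuples connect two distinct members. -/
def Expandable (Δ : SID Rel ar Pr pa) (A : Pr) : Prop :=
  ∀ (n : ℕ) (Ss : Fin n → Str Rel ar V),
    (∀ i, Ss i ∈ Canonical (V := V) Δ (natom A)) →
    (∀ i j, i ≠ j → (Ss i).supp ∩ (Ss j).supp = ∅) →
    ∃ (S : Str Rel ar V) (d : V → V → Prop),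
      RichCanonical Δ (natom A) S d ∧
      Substr (bigComp Ss) S ∧
      (∀ i j : Fin n, i < j → ∀ u ∈ (Ss i).supp, ∀ v ∈ (Ss j).supp, ¬ d u v) ∧
      ¬ ∃ (r : Rel) (t1 t2 : Fin (ar r) → V) (i j : Fin n),
          t1 ∈ S.interp r ∧ t2 ∈ S.interp r ∧ i < j ∧
          (∃ k, t1 k ∈ (Ss i).supp) ∧ (∃ k, t2 k ∈ (Ss j).supp) ∧ ∃ k l, t1 k = t2 l

/-- The set of structures obtained by internal fusion of rich canonical `Δ`-models. -/
def sifSet (Δ : SID Rel ar Pr pa) (φ : SLR Rel ar Pr pa) : Set (Str Rel ar V) :=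
  { S' | ∃ (S : Str Rel ar V) (d : V → V → Prop),
      RichCanonical Δ φ S d ∧ S' ∈ SIntFusion S d }

end Defs2

end SLRTW

namespace SLRTW

/-- Lemma 3.16: for disjoint structures and elements with disjoint
colors, the equivalence relation generated by the single pair `(u1, u2)` is compatible
with the composition. -/
theorem single_pair_compatible
    (Rel : Type) [Fintype Rel] (ar : Rel → ℕ) (har : ∀ r, 1 ≤ ar r)
    (V : Type) [Infinite V]
    (S1 S2 : Str Rel ar V) (hdisj : S1.supp ∩ S2.supp = ∅)
    (u1 u2 : V) (h1 : u1 ∈ S1.supp) (h2 : u2 ∈ S2.supp)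
    (hcol : color S1 u1 ∩ color S2 u2 = ∅) :
    CompatibleE (S1.comp S2) (EqvOf fun a b => a = u1 ∧ b = u2) := by
  have hdis : ∀ x, x ∈ S1.supp → x ∈ S2.supp → False := by
    intro x hx1 hx2
    have : x ∈ S1.supp ∩ S2.supp := ⟨hx1, hx2⟩
    rw [hdisj] at this; exact this
  -- explicit equivalence bounding EqvOf
  set E0 : V → V → Prop := fun x y =>
    x = y ∨ (x = u1 ∧ y = u2) ∨ (x = u2 ∧ y = u1) with hE0
  have hE0equiv : Equivalence E0 := by
    constructor
    · intro x; left; rfl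
    · intro x y h
      rcases h with h | ⟨ha, hb⟩ | ⟨ha, hb⟩
      · left; exact h.symm
      · right; right; exact ⟨hb, ha⟩
      · right; left; exact ⟨hb, ha⟩
    · intro x y z hxy hyz
      rcases hxy with h | ⟨ha, hb⟩ | ⟨ha, hb⟩
      · rw [h]; exact hyz
      · rcases hyz with h | ⟨hc, hd⟩ | ⟨hc, hd⟩
        · right; left; exact ⟨ha, h ▸ hb⟩
        · exact (hdis u1 h1 (by rw [hb.symm.trans hc] at h2; exact h2)).elim
        · left; exact ha.trans hd.symm
      · rcases hyz with h | ⟨hc, hd⟩ | ⟨hc, hd⟩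
        · right; right; exact ⟨ha, h ▸ hb⟩
        · left; exact ha.trans hd.symm
        · exact (hdis u2 (by rw [hb.symm.trans hc] at h1; exact h1) h2).elim
  have hle : ∀ a b, EqvOf (fun a b => a = u1 ∧ b = u2) a b → E0 a b := by
    intro a b h
    exact h E0 hE0equiv (fun x y ⟨hx, hy⟩ => Or.inr (Or.inl ⟨hx, hy⟩))
  intro r t1 ht1 t2 ht2 hne
  by_contra hcon
  push_neg at hcon
  have hE : ∀ i, E0 (t1 i) (t2 i) := fun i => hle _ _ (hcon i)
  -- supports
  have hsupp1 : ∀ (t : Fin (ar r) → V), t ∈ S1.interp r → ∀ i, t i ∈ S1.supp :=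
    fun t ht i => ⟨r, t, ht, i, rfl⟩
  have hsupp2 : ∀ (t : Fin (ar r) → V), t ∈ S2.interp r → ∀ i, t i ∈ S2.supp :=
    fun t ht i => ⟨r, t, ht, i, rfl⟩
  -- key: if t1 in S1 and t2 in S2 then t1 = const u1, t2 = const u2
  have key : ∀ (a b : Fin (ar r) → V), a ∈ S1.interp r → b ∈ S2.interp r →
      (∀ i, E0 (a i) (b i)) → (∀ i, a i = u1 ∧ b i = u2) := by
    intro a b ha hb hab i
    rcases hab i with h | ⟨hx, hy⟩ | ⟨hx, hy⟩
    · exact (hdis _ (hsupp1 a ha i) (by rw [h]; exact hsupp2 b hb i)).elim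
    · exact ⟨hx, hy⟩
    · exact (hdis u2 (by rw [← hx]; exact hsupp1 a ha i) h2).elim
  rcases ht1 with ht1 | ht1 <;> rcases ht2 with ht2 | ht2
  · -- both in S1: each coordinate equal or u1/u2 pair; u2 ∉ S1.supp
    apply hne; funext i
    rcases hE i with h | ⟨hx, hy⟩ | ⟨hx, hy⟩
    · exact h
    · exact (hdis u2 (by rw [← hy]; exact hsupp1 t2 ht2 i) h2).elim
    · exact (hdis u2 (by rw [← hx]; exact hsupp1 t1 ht1 i) h2).elim
  · -- t1 ∈ S1, t2 ∈ S2: constant tuples, contradict color disjointness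
    have hk := key t1 t2 ht1 ht2 hE
    have ht1' : t1 = fun _ => u1 := funext fun i => (hk i).1
    have ht2' : t2 = fun _ => u2 := funext fun i => (hk i).2
    rw [ht1'] at ht1; rw [ht2'] at ht2
    have : r ∈ color S1 u1 ∩ color S2 u2 := ⟨ht1, ht2⟩
    rw [hcol] at this; exact this
  · -- t2 ∈ S1, t1 ∈ S2: symmetric
    have hk := key t2 t1 ht2 ht1 (fun i => hE0equiv.symm (hE i))
    have ht1' : t1 = fun _ => u2 := funext fun i => (hk i).2
    have ht2' : t2 = fun _ => u1 := funext fun i => (hk i).1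
    rw [ht1'] at ht1; rw [ht2'] at ht2
    have : r ∈ color S1 u1 ∩ color S2 u2 := ⟨ht2, ht1⟩
    rw [hcol] at this; exact this
  · -- both in S2
    apply hne; funext i
    rcases hE i with h | ⟨hx, hy⟩ | ⟨hx, hy⟩
    · exact h
    · exact (hdis u1 h1 (by rw [← hx]; exact hsupp2 t1 ht1 i)).elim
    · exact (hdis u1 h1 (by rw [← hy]; exact hsupp2 t2 ht2 i)).elim

end SLRTW
end

section
/- Let Δ be a SID expandable for a nullary predicate A. Then: if ief*(C[[A]]_Δ) is treewidth-bounded, then [[A]]_Δ is treewidth-bounded; and if [[A]]_Δ is treewidth-bounded, then ef*(C[[A]]_Δ) is treewidth-bounded. -/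
/-!
A model of `A` is obtained by evaluating a complete unfolding of `A`, which can be chosen
well-named. Lifting it along a canonical store of the matrix yields a canonical model of which
the given model is the quotient by the kernel of the lifting map, a compatible equivalence:
every model lies in `ief*(C[[A]])`, whence the first implication.

Conversely, by induction on external fusions, every member of `ef*(C[[A]])` is the image of a
disjoint composition of canonical models under a map injective on each component and on tuples
(a "flattening"). Expandability embeds that composition into a rich canonical model in which
neither a disequality nor two overlapping tuples connect distinct components, so the same map,
extended injectively by fresh elements, sends the rich canonical model to a model of `A`
containing the given structure. Treewidth does not decrease when tuples are added.
-/

namespace SLRTW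

section Structures

variable {Rel : Type} {ar : Rel → ℕ} {V : Type}

theorem Str.ext' {S1 S2 : Str Rel ar V} (h : ∀ r, S1.interp r = S2.interp r) : S1 = S2 := by
  cases S1; cases S2; simp only [Str.mk.injEq]; exact funext h

theorem Str.mem_supp {S : Str Rel ar V} {r : Rel} {t : Fin (ar r) → V} (ht : t ∈ S.interp r)
    (i : Fin (ar r)) : t i ∈ S.supp :=
  ⟨r, t, ht, i, rfl⟩

theorem Str.supp_finite (S : Str Rel ar V) : S.supp.Finite := by
  refine (S.finite_active.biUnion fun r _ =>
    (S.finite_interp r).biUnion fun t _ => Set.finite_range t).subset ?_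
  rintro u ⟨r, t, ht, i, rfl⟩
  exact Set.mem_biUnion (Set.nonempty_iff_ne_empty.mp ⟨t, ht⟩) (Set.mem_biUnion ht ⟨i, rfl⟩)

@[simp] theorem interp_mapStr (h : V → V) (S : Str Rel ar V) (r : Rel) :
    (mapStr h S).interp r = (fun t => h ∘ t) '' S.interp r := rfl

theorem supp_mapStr (h : V → V) (S : Str Rel ar V) : (mapStr h S).supp = h '' S.supp := by
  ext u
  constructor
  · rintro ⟨r, _, ⟨t, ht, rfl⟩, i, rfl⟩
    exact ⟨t i, Str.mem_supp ht i, rfl⟩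
  · rintro ⟨_, ⟨r, t, ht, i, rfl⟩, rfl⟩
    exact ⟨r, h ∘ t, ⟨t, ht, rfl⟩, i, rfl⟩

theorem mapStr_mapStr (g h : V → V) (S : Str Rel ar V) :
    mapStr g (mapStr h S) = mapStr (g ∘ h) S :=
  Str.ext' fun r => by simp only [interp_mapStr, Set.image_image]; rfl

theorem mapStr_congr {g h : V → V} {S : Str Rel ar V} (H : Set.EqOn g h S.supp) :
    mapStr g S = mapStr h S :=
  Str.ext' fun _ => Set.image_congr fun _ ht => funext fun i => H (Str.mem_supp ht i)

theorem mapStr_id (S : Str Rel ar V) : mapStr id S = S :=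
  Str.ext' fun _ => Set.image_id _

theorem mapStr_of_empS {S : Str Rel ar V} (hS : EmpS S) (h : V → V) : mapStr h S = S :=
  Str.ext' fun r => by rw [interp_mapStr, hS r, Set.image_empty]

@[simp] theorem interp_comp (S1 S2 : Str Rel ar V) (r : Rel) :
    (S1.comp S2).interp r = S1.interp r ∪ S2.interp r := rfl

theorem mapStr_comp (h : V → V) (S1 S2 : Str Rel ar V) :
    mapStr h (S1.comp S2) = (mapStr h S1).comp (mapStr h S2) :=
  Str.ext' fun r => by simp only [interp_mapStr, interp_comp, Set.image_union]

theorem supp_comp (S1 S2 : Str Rel ar V) : (S1.comp S2).supp = S1.supp ∪ S2.supp := by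
  ext u
  constructor
  · rintro ⟨r, t, ht | ht, i, rfl⟩
    exacts [Or.inl ⟨r, t, ht, i, rfl⟩, Or.inr ⟨r, t, ht, i, rfl⟩]
  · rintro (⟨r, t, ht, i, rfl⟩ | ⟨r, t, ht, i, rfl⟩)
    exacts [⟨r, t, Or.inl ht, i, rfl⟩, ⟨r, t, Or.inr ht, i, rfl⟩]

@[simp] theorem interp_bigComp {n : ℕ} (Ss : Fin n → Str Rel ar V) (r : Rel) :
    (bigComp Ss).interp r = ⋃ i, (Ss i).interp r := rfl

theorem supp_bigComp {n : ℕ} (Ss : Fin n → Str Rel ar V) :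
    (bigComp Ss).supp = ⋃ i, (Ss i).supp := by
  ext u
  simp only [Str.supp, interp_bigComp, Set.mem_iUnion, Set.mem_setOf_eq]
  constructor
  · rintro ⟨r, t, ⟨i, ht⟩, hu⟩
    exact ⟨i, r, t, ht, hu⟩
  · rintro ⟨i, r, t, ht, hu⟩
    exact ⟨r, t, ⟨i, ht⟩, hu⟩

theorem bigComp_const_one (S : Str Rel ar V) : bigComp (fun _ : Fin 1 => S) = S :=
  Str.ext' fun r => by simp only [interp_bigComp, Set.iUnion_const]

theorem bigComp_addCases {n1 n2 : ℕ} (Ss1 : Fin n1 → Str Rel ar V)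
    (Ss2 : Fin n2 → Str Rel ar V) :
    bigComp (Fin.addCases Ss1 Ss2 : Fin (n1 + n2) → Str Rel ar V) =
      (bigComp Ss1).comp (bigComp Ss2) := by
  refine Str.ext' fun r => Set.ext fun t => ?_
  simp only [interp_bigComp, interp_comp, Set.mem_iUnion, Set.mem_union]
  constructor
  · rintro ⟨i, hi⟩
    induction i using Fin.addCases with
    | left i => exact Or.inl ⟨i, by simpa using hi⟩
    | right j => exact Or.inr ⟨j, by simpa using hi⟩
  · rintro (⟨i, hi⟩ | ⟨j, hj⟩)
    exacts [⟨Fin.castAdd n2 i, by simpa using hi⟩, ⟨Fin.natAdd n1 j, by simpa using hj⟩]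

theorem injOn_tuples_of_injOn_supp {g : V → V} {S : Str Rel ar V} (hg : Set.InjOn g S.supp)
    (r : Rel) : Set.InjOn (fun t => g ∘ t) (S.interp r) :=
  fun _ ht1 _ ht2 he => funext fun i =>
    hg (Str.mem_supp ht1 i) (Str.mem_supp ht2 i) (congrFun he i)

theorem mapStr_invFunOn_mapStr [Nonempty V] {g : V → V} {S : Str Rel ar V}
    (hg : Set.InjOn g S.supp) : mapStr (Function.invFunOn g S.supp) (mapStr g S) = S := by
  rw [mapStr_mapStr, mapStr_congr (g := Function.invFunOn g S.supp ∘ g) (h := id)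
    fun _ hx => hg.leftInvOn_invFunOn hx, mapStr_id]

theorem exists_injOn_disjoint_image [Infinite V] {P F : Set V} (hP : P.Countable)
    (hF : F.Finite) : ∃ g : V → V, Set.InjOn g P ∧ Disjoint (g '' P) F := by
  classical
  have : Infinite (Fᶜ : Set V) := hF.infinite_compl.to_subtype
  have : Countable P := hP.to_subtype
  obtain ⟨e, he⟩ := Countable.exists_injective_nat P
  let emb := Infinite.natEmbedding (Fᶜ : Set V)
  refine ⟨fun v => if hv : v ∈ P then (emb (e ⟨v, hv⟩) : V) else v, ?_, ?_⟩
  · intro a ha b hb hab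
    simp only [dif_pos ha, dif_pos hb] at hab
    exact congrArg Subtype.val (he (emb.injective (Subtype.ext hab)))
  · rw [Set.disjoint_left]
    rintro _ ⟨v, hv, rfl⟩
    simp only [dif_pos hv]
    exact (emb _).2

end Structures

section Treewidth

variable {Rel : Type} {ar : Rel → ℕ} {V : Type}

theorem Str.supp_mono {S1 S2 : Str Rel ar V} (h : ∀ r, S1.interp r ⊆ S2.interp r) :
    S1.supp ⊆ S2.supp :=
  fun _ ⟨r, t, ht, hu⟩ => ⟨r, t, h r ht, hu⟩

noncomputable def TreeDecomp.single (S : Str Rel ar V) : TreeDecomp S where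
  ι := PUnit
  instFin := inferInstance
  G := ⊥
  isTree := .of_subsingleton
  bag _ := S.supp_finite.toFinset
  bag_cover _ _ ht := ⟨PUnit.unit, fun i => S.supp_finite.mem_toFinset.mpr (Str.mem_supp ht i)⟩
  bag_conn u hu := by
    have : Nonempty {n : PUnit | u ∈ S.supp_finite.toFinset} :=
      ⟨⟨PUnit.unit, S.supp_finite.mem_toFinset.mpr hu⟩⟩
    exact .of_subsingleton

open scoped Classical in
noncomputable def TreeDecomp.restrict {S1 S2 : Str Rel ar V} (T : TreeDecomp S2)
    (h : ∀ r, S1.interp r ⊆ S2.interp r) : TreeDecomp S1 where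
  ι := T.ι
  instFin := T.instFin
  G := T.G
  isTree := T.isTree
  bag n := (T.bag n).filter (· ∈ S1.supp)
  bag_cover r t ht :=
    let ⟨n, hn⟩ := T.bag_cover r t (h r ht)
    ⟨n, fun i => Finset.mem_filter.mpr ⟨hn i, Str.mem_supp ht i⟩⟩
  bag_conn u hu := by
    have hset : {n | u ∈ (T.bag n).filter (· ∈ S1.supp)} = {n | u ∈ T.bag n} :=
      Set.ext fun n => by simp [hu]
    rw [hset]
    exact T.bag_conn u (Str.supp_mono h hu)

open scoped Classical in
theorem TreeDecomp.width_restrict_le {S1 S2 : Str Rel ar V} (T : TreeDecomp S2)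
    (h : ∀ r, S1.interp r ⊆ S2.interp r) : (T.restrict h).width ≤ T.width :=
  Nat.sub_le_sub_right (Finset.sup_mono_fun fun _ _ => Finset.card_filter_le _ _) 1

theorem tw_mono {S1 S2 : Str Rel ar V} (h : ∀ r, S1.interp r ⊆ S2.interp r) :
    tw S1 ≤ tw S2 := by
  obtain ⟨T, hT⟩ := Nat.sInf_mem
    (⟨_, TreeDecomp.single S2, rfl⟩ : {w | ∃ T : TreeDecomp S2, T.width = w}.Nonempty)
  calc tw S1 ≤ (T.restrict h).width := Nat.sInf_le ⟨_, rfl⟩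
    _ ≤ T.width := T.width_restrict_le h
    _ = tw S2 := hT

end Treewidth

section Semantics

variable {Rel : Type} {ar : Rel → ℕ} {V : Type} {Pr : Type} {pa : Pr → ℕ}
  {Δ : SID Rel ar Pr pa}

theorem SLR.fv_finite (φ : SLR Rel ar Pr pa) : φ.fv.Finite := by
  induction φ with
  | emp => exact Set.finite_empty
  | eq x y | ne x y => exact (Set.finite_singleton y).insert x
  | rel _ a | pred _ a => exact Set.finite_range a
  | star _ _ ih1 ih2 => exact ih1.union ih2
  | ex _ _ ih => exact ih.sdiff

theorem SLR.neOccurs_symm {φ : SLR Rel ar Pr pa} {x y : ℕ} (h : φ.neOccurs x y) :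
    φ.neOccurs y x := by
  induction φ with
  | ne a b => exact h.symm
  | star _ _ ih1 ih2 => exact h.imp ih1 ih2
  | ex _ _ ih => exact ih h
  | _ => exact h

theorem SLR.QPF.mem_fv_of_neOccurs {ψ : SLR Rel ar Pr pa} {x y : ℕ} (hq : ψ.QPF)
    (h : ψ.neOccurs x y) : x ∈ ψ.fv ∧ y ∈ ψ.fv := by
  induction ψ with
  | ne a b => rcases h with ⟨rfl, rfl⟩ | ⟨rfl, rfl⟩ <;> simp [SLR.fv]
  | star _ _ ih1 ih2 =>
    rcases h with h | h
    · exact (ih1 hq.1 h).imp Or.inl Or.inl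
    · exact (ih2 hq.2 h).imp Or.inr Or.inr
  | ex => exact hq.elim
  | _ => exact h.elim

theorem SLR.QPF.eqConseq_of_eqOccurs {ψ : SLR Rel ar Pr pa} {x y : ℕ} (hq : ψ.QPF)
    (h : ψ.eqOccurs x y) : EqConseq (V := V) Δ ψ x y := by
  induction ψ with
  | eq a b =>
    intro S s hs
    cases hs with
    | eq _ hab => rcases h with ⟨rfl, rfl⟩ | ⟨rfl, rfl⟩; exacts [hab, hab.symm]
  | star _ _ ih1 ih2 =>
    intro S s hs
    cases hs with
    | star _ h1 h2 => exact h.elim (fun h => ih1 hq.1 h _ s h1) (fun h => ih2 hq.2 h _ s h2)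
  | ex => exact hq.elim
  | _ => exact h.elim

theorem SLR.PredFree.qpf_matrix {χ : SLR Rel ar Pr pa} (h : χ.PredFree) : χ.matrix.QPF := by
  induction χ with
  | pred => exact h.elim
  | star _ _ ih1 ih2 => exact ⟨ih1 h.1, ih2 h.2⟩
  | ex _ _ ih => exact ih h
  | _ => trivial

theorem SLR.fv_matrix_subset (χ : SLR Rel ar Pr pa) :
    χ.matrix.fv ⊆ χ.fv ∪ {b | b ∈ χ.binders} := by
  induction χ with
  | star φ ψ ih1 ih2 =>
    rintro z (hz | hz)
    · rcases ih1 hz with h | h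
      exacts [Or.inl (Or.inl h), Or.inr (List.mem_append_left _ h)]
    · rcases ih2 hz with h | h
      exacts [Or.inl (Or.inr h), Or.inr (List.mem_append_right _ h)]
  | ex x φ ih =>
    intro z hz
    by_cases hzx : z = x
    · exact Or.inr (hzx ▸ List.mem_cons_self)
    · rcases ih hz with h | h
      exacts [Or.inl ⟨h, hzx⟩, Or.inr (List.mem_cons_of_mem _ h)]
  | _ => exact Set.subset_union_left

theorem Sat.congr_store {S : Str Rel ar V} {s s' : ℕ → V} {φ : SLR Rel ar Pr pa}
    (h : Sat Δ S s φ) (hs : ∀ x ∈ φ.fv, s x = s' x) : Sat Δ S s' φ := by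
  induction h generalizing s' with
  | emp he => exact .emp he
  | eq he hxy =>
    exact .eq he (by rw [← hs _ (by simp [SLR.fv]), ← hs _ (by simp [SLR.fv]), hxy])
  | ne he hxy =>
    exact .ne he (by rw [← hs _ (by simp [SLR.fv]), ← hs _ (by simp [SLR.fv])]; exact hxy)
  | @rel S s r a h1 h2 =>
    exact .rel (by rw [h1]; congr 1; exact funext fun i => hs (a i) ⟨i, rfl⟩) h2
  | @pred S s A a body hbody _ ih =>
    refine .pred hbody (ih fun x hx => ?_)
    have hlt : x < pa A := Δ.wf A body hbody hx
    simp only [dif_pos hlt]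
    exact hs _ ⟨⟨x, hlt⟩, rfl⟩
  | star hdisj _ _ ih1 ih2 =>
    exact .star hdisj (ih1 fun x hx => hs x (Or.inl hx)) (ih2 fun x hx => hs x (Or.inr hx))
  | @ex S s x φ u _ ih =>
    refine .ex u (ih fun y hy => ?_)
    by_cases hyx : y = x
    · simp [hyx]
    · simp only [Function.update_of_ne hyx]
      exact hs y ⟨hy, hyx⟩

theorem Sat.ne_of_neOccurs {S : Str Rel ar V} {s : ℕ → V} {ψ : SLR Rel ar Pr pa} {x y : ℕ}
    (h : Sat Δ S s ψ) (hq : ψ.QPF) (hocc : ψ.neOccurs x y) : s x ≠ s y := by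
  induction h with
  | ne _ hab => rcases hocc with ⟨rfl, rfl⟩ | ⟨rfl, rfl⟩; exacts [hab, Ne.symm hab]
  | star _ _ _ ih1 ih2 => exact hocc.elim (ih1 hq.1) (ih2 hq.2)
  | pred | ex => exact hq.elim
  | _ => exact hocc.elim

theorem Sat.map {S : Str Rel ar V} {s : ℕ → V} {ψ : SLR Rel ar Pr pa}
    (h : Sat Δ S s ψ) (hq : ψ.QPF) {g : V → V}
    (hne : ∀ x y, ψ.neOccurs x y → g (s x) ≠ g (s y))
    (hinj : ∀ r, Set.InjOn (fun t => g ∘ t) (S.interp r)) :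
    Sat Δ (mapStr g S) (g ∘ s) ψ := by
  induction h with
  | emp he => exact .emp (by rwa [mapStr_of_empS he])
  | eq he hxy => exact .eq (by rwa [mapStr_of_empS he]) (congrArg g hxy)
  | ne he _ => exact .ne (by rwa [mapStr_of_empS he]) (hne _ _ (Or.inl ⟨rfl, rfl⟩))
  | rel h1 h2 =>
    refine .rel ?_ fun r' hr' => ?_
    · rw [interp_mapStr, h1, Set.image_singleton]; rfl
    · rw [interp_mapStr, h2 r' hr', Set.image_empty]
  | @star S1 S2 s φ ψ hdisj _ _ ih1 ih2 =>
    rw [mapStr_comp]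
    refine .star (fun r => Set.eq_empty_of_forall_notMem ?_)
      (ih1 hq.1 (fun x y hocc => hne x y (Or.inl hocc))
        fun r => (hinj r).mono Set.subset_union_left)
      (ih2 hq.2 (fun x y hocc => hne x y (Or.inr hocc))
        fun r => (hinj r).mono Set.subset_union_right)
    rintro _ ⟨⟨t1, m1, rfl⟩, ⟨t2, m2, he⟩⟩
    obtain rfl := hinj r (Or.inr m2) (Or.inl m1) he
    exact (Set.eq_empty_iff_forall_notMem.mp (hdisj r)) t2 ⟨m1, m2⟩
  | pred | ex => exact hq.elim

theorem Sat.of_matrix {S : Str Rel ar V} {s : ℕ → V} {χ : SLR Rel ar Pr pa}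
    (h : Sat Δ S s χ.matrix) : Sat Δ S s χ := by
  induction χ generalizing S s with
  | star φ ψ ih1 ih2 =>
    cases h with
    | star hdisj h1 h2 => exact .star hdisj (ih1 h1) (ih2 h2)
  | ex x φ ih => exact .ex (s x) (by rw [Function.update_eq_self]; exact ih h)
  | _ => exact h

theorem IsSubst.sat {f : ℕ → ℕ} {φ φ' : SLR Rel ar Pr pa} (hsub : IsSubst f φ φ')
    {S : Str Rel ar V} {s : ℕ → V} (h : Sat Δ S s φ') : Sat Δ S (s ∘ f) φ := by
  induction hsub generalizing S s with
  | emp => cases h with | emp he => exact .emp he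
  | eq => cases h with | eq he hxy => exact .eq he hxy
  | ne => cases h with | ne he hxy => exact .ne he hxy
  | rel => cases h with | rel h1 h2 => exact .rel h1 h2
  | pred =>
    cases h with
    | pred hbody hsat =>
      refine .pred hbody (hsat.congr_store fun x hx => ?_)
      have hlt : x < pa _ := Δ.wf _ _ hbody hx
      rw [dif_pos hlt, dif_pos hlt]
      rfl
  | star _ _ ih1 ih2 => cases h with | star hdisj h1 h2 => exact .star hdisj (ih1 h1) (ih2 h2)
  | @ex f x z φ φ' hcap _ ih =>
    cases h with
    | ex u hsat =>
      refine .ex u ((ih hsat).congr_store fun y hy => ?_)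
      by_cases hyx : y = x
      · simp [hyx]
      · simp only [Function.comp_apply, Function.update_of_ne hyx,
          Function.update_of_ne (hcap y hy hyx)]

theorem Step.sat {φ φ' : SLR Rel ar Pr pa} (hst : Step Δ φ φ') {S : Str Rel ar V}
    {s : ℕ → V} (h : Sat Δ S s φ') : Sat Δ S s φ := by
  induction hst generalizing S s with
  | @unfold A a body ψ hbody hsub =>
    refine .pred hbody ((hsub.sat h).congr_store fun x _ => ?_)
    by_cases hlt : x < pa A <;> simp [hlt]
  | starL _ ih => cases h with | star hdisj h1 h2 => exact .star hdisj (ih h1) h2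
  | starR _ ih => cases h with | star hdisj h1 h2 => exact .star hdisj h1 (ih h2)
  | exC _ ih => cases h with | ex u hsat => exact .ex u (ih hsat)

theorem Unfolds.sat {φ χ : SLR Rel ar Pr pa} (h : Unfolds Δ φ χ) {S : Str Rel ar V}
    {s : ℕ → V} (hs : Sat Δ S s χ) : Sat Δ S s φ := by
  induction h with
  | refl => exact hs
  | tail _ h2 ih => exact ih (h2.sat hs)

theorem Unfolds.star {φ φ' ψ ψ' : SLR Rel ar Pr pa} (h1 : Unfolds Δ φ φ')
    (h2 : Unfolds Δ ψ ψ') : Unfolds Δ (.star φ ψ) (.star φ' ψ') :=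
  (Relation.ReflTransGen.lift (fun χ => SLR.star χ ψ) (fun _ _ => Step.starL) _ _ h1).trans
    (Relation.ReflTransGen.lift (fun χ => SLR.star φ' χ) (fun _ _ => Step.starR) _ _ h2)

theorem Unfolds.ex (x : ℕ) {φ φ' : SLR Rel ar Pr pa} (h : Unfolds Δ φ φ') :
    Unfolds Δ (.ex x φ) (.ex x φ') :=
  Relation.ReflTransGen.lift (fun χ => SLR.ex x χ) (fun _ _ => Step.exC) _ _ h

end Semantics

section Canonization

variable {Rel : Type} {ar : Rel → ℕ} {V : Type} {Pr : Type} {pa : Pr → ℕ}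
  {Δ : SID Rel ar Pr pa}

theorem SLR.QPF.predFree {ψ : SLR Rel ar Pr pa} (hq : ψ.QPF) : ψ.PredFree := by
  induction ψ with
  | star _ _ ih1 ih2 => exact ⟨ih1 hq.1, ih2 hq.2⟩
  | pred | ex => exact hq.elim
  | _ => trivial

theorem SLR.QPF.binders_eq_nil {ψ : SLR Rel ar Pr pa} (hq : ψ.QPF) : ψ.binders = [] := by
  induction ψ with
  | star _ _ ih1 ih2 => simp [SLR.binders, ih1 hq.1, ih2 hq.2]
  | pred | ex => exact hq.elim
  | _ => rfl

theorem SLR.QPF.matrix_eq {ψ : SLR Rel ar Pr pa} (hq : ψ.QPF) : ψ.matrix = ψ := by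
  induction ψ with
  | star _ _ ih1 ih2 => simp [SLR.matrix, ih1 hq.1, ih2 hq.2]
  | pred | ex => exact hq.elim
  | _ => rfl

/-- The invariant of the induction on `Sat` that extracts a well-named complete unfolding:
the renaming `f` is needed to unfold predicate atoms, the finite set `W` of forbidden names keeps
bound variables fresh, and the reference store `s'` lets the stores found for the two sides of a
separating conjunction be merged. -/
def UnfoldsFreshly (Δ : SID Rel ar Pr pa) (S : Str Rel ar V) (s : ℕ → V)
    (φ : SLR Rel ar Pr pa) : Prop :=
  ∀ (f : ℕ → ℕ) (s' : ℕ → V) (W : Set ℕ), W.Finite → f '' φ.fv ⊆ W →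
    (∀ x ∈ φ.fv, s x = s' (f x)) →
    ∃ (φf χ : SLR Rel ar Pr pa) (sχ : ℕ → V),
      IsSubst f φ φf ∧ Unfolds Δ φf χ ∧ χ.PredFree ∧
      χ.binders.Nodup ∧ (∀ b ∈ χ.binders, b ∉ W) ∧ χ.fv ⊆ f '' φ.fv ∧
      (∀ y ∉ χ.binders, sχ y = s' y) ∧ Sat Δ S sχ χ.matrix

theorem unfoldsFreshly_of_qpf {S : Str Rel ar V} {s : ℕ → V} {φ : SLR Rel ar Pr pa}
    (h : ∀ (f : ℕ → ℕ) (s' : ℕ → V), (∀ x ∈ φ.fv, s x = s' (f x)) →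
      ∃ φf, IsSubst f φ φf ∧ φf.QPF ∧ φf.fv ⊆ f '' φ.fv ∧ Sat Δ S s' φf) :
    UnfoldsFreshly Δ S s φ := by
  intro f s' W _ _ hs
  obtain ⟨φf, hsub, hq, hfv, hsat⟩ := h f s' hs
  refine ⟨φf, φf, s', hsub, .refl, hq.predFree, ?_, ?_, hfv, fun _ _ => rfl, ?_⟩
  · rw [hq.binders_eq_nil]; exact List.nodup_nil
  · simp [hq.binders_eq_nil]
  · rwa [hq.matrix_eq]

theorem UnfoldsFreshly.pred {S : Str Rel ar V} {s : ℕ → V} {A : Pr} {a : Fin (pa A) → ℕ}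
    {body : SLR Rel ar Pr pa} (hbody : body ∈ Δ.rules A)
    (ih : UnfoldsFreshly Δ S (fun n => if h : n < pa A then s (a ⟨n, h⟩) else s n) body) :
    UnfoldsFreshly Δ S s (.pred A a) := by
  intro f s' W hW hWf hs
  have hlt : ∀ x ∈ body.fv, x < pa A := fun x hx => Δ.wf A body hbody hx
  have hrange : (fun n => if h : n < pa A then f (a ⟨n, h⟩) else n) '' body.fv ⊆
      f '' (SLR.pred A a : SLR Rel ar Pr pa).fv := by
    rintro _ ⟨x, hx, rfl⟩
    dsimp only
    rw [dif_pos (hlt x hx)]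
    exact ⟨_, ⟨_, rfl⟩, rfl⟩
  obtain ⟨ψ, χ, sχ, hsub, hunf, hpf, hnd, hav, hfv, hst, hsat⟩ :=
    ih _ s' W hW (hrange.trans hWf) fun x hx => by
      simp only [dif_pos (hlt x hx)]
      exact hs _ ⟨_, rfl⟩
  exact ⟨_, χ, sχ, .pred, .head (.unfold hbody hsub) hunf, hpf, hnd, hav, hfv.trans hrange,
    hst, hsat⟩

theorem UnfoldsFreshly.star {S1 S2 : Str Rel ar V} {s : ℕ → V} {φ ψ : SLR Rel ar Pr pa}
    (hdisj : LocDisj S1 S2) (ih1 : UnfoldsFreshly Δ S1 s φ) (ih2 : UnfoldsFreshly Δ S2 s ψ) :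
    UnfoldsFreshly Δ (S1.comp S2) s (.star φ ψ) := by
  intro f s' W hW hWf hs
  have hW1 : f '' φ.fv ⊆ W := (Set.image_mono Set.subset_union_left).trans hWf
  have hW2 : f '' ψ.fv ⊆ W := (Set.image_mono Set.subset_union_right).trans hWf
  obtain ⟨φf, χ1, s1, hsub1, hunf1, hpf1, hnd1, hav1, hfv1, hst1, hsat1⟩ :=
    ih1 f s' W hW hW1 fun x hx => hs x (Or.inl hx)
  -- the binders of `χ2` must also avoid those of `χ1`
  obtain ⟨ψf, χ2, s2, hsub2, hunf2, hpf2, hnd2, hav2, hfv2, hst2, hsat2⟩ :=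
    ih2 f s' (W ∪ {b | b ∈ χ1.binders}) (hW.union χ1.binders.finite_toSet)
      (hW2.trans Set.subset_union_left) fun x hx => hs x (Or.inr hx)
  classical
  refine ⟨.star φf ψf, .star χ1 χ2, fun y => if y ∈ χ1.binders then s1 y else s2 y,
    .star hsub1 hsub2, hunf1.star hunf2, ⟨hpf1, hpf2⟩,
    hnd1.append hnd2 fun b hb1 hb2 => hav2 b hb2 (Or.inr hb1), ?_,
    Set.union_subset (hfv1.trans (Set.image_mono Set.subset_union_left))
      (hfv2.trans (Set.image_mono Set.subset_union_right)), ?_, .star hdisj ?_ ?_⟩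
  · intro b hb
    rcases List.mem_append.mp hb with hb | hb
    exacts [hav1 b hb, fun h => hav2 b hb (Or.inl h)]
  · intro y hy
    dsimp only
    rw [if_neg fun h => hy (List.mem_append_left _ h)]
    exact hst2 y fun h => hy (List.mem_append_right _ h)
  · refine hsat1.congr_store fun z hz => ?_
    split_ifs with hzb
    · rfl
    have hzW : z ∈ W := hW1 (hfv1 ((χ1.fv_matrix_subset hz).resolve_right hzb))
    rw [hst1 z hzb, hst2 z fun h => hav2 z h (Or.inl hzW)]
  · refine hsat2.congr_store fun z hz => (if_neg fun hz1 => ?_).symm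
    rcases χ2.fv_matrix_subset hz with hz' | hz'
    exacts [hav1 z hz1 (hW2 (hfv2 hz')), hav2 z hz' (Or.inr hz1)]

theorem UnfoldsFreshly.ex {S : Str Rel ar V} {s : ℕ → V} {x : ℕ}
    {φ : SLR Rel ar Pr pa} {u : V} (ih : UnfoldsFreshly Δ S (Function.update s x u) φ) :
    UnfoldsFreshly Δ S s (.ex x φ) := by
  intro f s' W hW hWf hs
  obtain ⟨z, hz⟩ := (hW.union ((φ.fv_finite.sdiff (t := {x})).image f)).infinite_compl.nonempty
  have hzW : z ∉ W := fun h => hz (Or.inl h)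
  have hcap : ∀ y ∈ φ.fv, y ≠ x → f y ≠ z := fun y hy hyx hfy => hz (Or.inr ⟨y, ⟨hy, hyx⟩, hfy⟩)
  have hW' : Function.update f x z '' φ.fv ⊆ W ∪ {z} := by
    rintro _ ⟨y, hy, rfl⟩
    by_cases hyx : y = x
    · subst hyx; simp
    · rw [Function.update_of_ne hyx]; exact Or.inl (hWf ⟨y, ⟨hy, hyx⟩, rfl⟩)
  have hs' : ∀ y ∈ φ.fv, Function.update s x u y =
      Function.update s' z u (Function.update f x z y) := by
    intro y hy
    by_cases hyx : y = x
    · subst hyx; simp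
    · rw [Function.update_of_ne hyx, Function.update_of_ne hyx,
        Function.update_of_ne (hcap y hy hyx)]
      exact hs y ⟨hy, hyx⟩
  obtain ⟨φf, χ, sχ, hsub, hunf, hpf, hnd, hav, hfv, hst, hsat⟩ :=
    ih (Function.update f x z) (Function.update s' z u) (W ∪ {z})
      (hW.union (Set.finite_singleton z)) hW' hs'
  refine ⟨.ex z φf, .ex z χ, sχ, .ex hcap hsub, hunf.ex z, hpf,
    List.nodup_cons.mpr ⟨fun h => hav z h (Or.inr rfl), hnd⟩, ?_, ?_, ?_, hsat⟩
  · simp only [SLR.binders, List.mem_cons]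
    rintro b (rfl | hb)
    exacts [hzW, fun h => hav b hb (Or.inl h)]
  · rintro w ⟨hw, hwz⟩
    obtain ⟨y, hy, rfl⟩ := hfv hw
    by_cases hyx : y = x
    · subst hyx; simp at hwz
    · rw [Function.update_of_ne hyx]; exact ⟨y, ⟨hy, hyx⟩, rfl⟩
  · intro y hy
    simp only [SLR.binders, List.mem_cons, not_or] at hy
    rw [hst y hy.2, Function.update_of_ne hy.1]

theorem Sat.unfoldsFreshly {S : Str Rel ar V} {s : ℕ → V} {φ : SLR Rel ar Pr pa}
    (h : Sat Δ S s φ) : UnfoldsFreshly Δ S s φ := by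
  induction h with
  | emp he =>
    exact unfoldsFreshly_of_qpf fun _ _ _ => ⟨.emp, .emp, trivial, by simp [SLR.fv], .emp he⟩
  | @eq S s x y he hxy =>
    refine unfoldsFreshly_of_qpf fun f s' hs =>
      ⟨_, .eq, trivial, (Set.image_pair f x y).ge, .eq he ?_⟩
    rw [← hs x (by simp [SLR.fv]), ← hs y (by simp [SLR.fv]), hxy]
  | @ne S s x y he hxy =>
    refine unfoldsFreshly_of_qpf fun f s' hs =>
      ⟨_, .ne, trivial, (Set.image_pair f x y).ge, .ne he ?_⟩
    rwa [← hs x (by simp [SLR.fv]), ← hs y (by simp [SLR.fv])]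
  | @rel S s r a h1 h2 =>
    refine unfoldsFreshly_of_qpf fun f s' hs =>
      ⟨_, .rel, trivial, (Set.range_comp f a).le, .rel ?_ h2⟩
    rw [h1]
    exact congrArg _ (funext fun i => hs (a i) ⟨i, rfl⟩)
  | pred hbody _ ih => exact .pred hbody ih
  | star hdisj _ _ ih1 ih2 => exact .star hdisj ih1 ih2
  | ex _ _ ih => exact .ex ih

theorem Sat.exists_wellNamed_unfolding {S : Str Rel ar V} {s : ℕ → V} {A : Pr}
    {a : Fin (pa A) → ℕ} (h : Sat Δ S s (.pred A a)) :
    ∃ (χ : SLR Rel ar Pr pa) (s' : ℕ → V),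
      Unfolds Δ (.pred A a) χ ∧ χ.PredFree ∧ χ.WellNamed ∧ Sat Δ S s' χ.matrix := by
  obtain ⟨_, χ, s', hsub, hunf, hpf, hnd, hav, hfv, -, hsat⟩ :=
    h.unfoldsFreshly id s _ (SLR.fv_finite (.pred A a)) (by rw [Set.image_id])
      fun _ _ => rfl
  cases hsub
  exact ⟨χ, s', hunf, hpf, ⟨hnd, fun b hb hbf => hav b hb (by simpa using hfv hbf)⟩, hsat⟩

theorem exists_canonical_store [Infinite V] {S : Str Rel ar V} {s : ℕ → V}
    {ψ : SLR Rel ar Pr pa} (hsat : Sat Δ S s ψ) :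
    ∃ (sc : ℕ → V) (h : V → V), (∀ x y, sc x = sc y ↔ EqConseq (V := V) Δ ψ x y) ∧
      h ∘ sc = s := by
  let E : Setoid ℕ := ⟨EqConseq (V := V) Δ ψ, ⟨fun _ _ _ _ => rfl,
    fun h S s hs => (h S s hs).symm, fun h1 h2 S s hs => (h1 S s hs).trans (h2 S s hs)⟩⟩
  obtain ⟨e, he⟩ := Countable.exists_injective_nat (Quotient E)
  have hinj : Function.Injective fun q => Infinite.natEmbedding V (e q) :=
    (Infinite.natEmbedding V).injective.comp he
  refine ⟨fun x => Infinite.natEmbedding V (e ⟦x⟧),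
    Function.extend _ (Quotient.lift s fun _ _ (hxy : EqConseq Δ ψ _ _) => hxy S s hsat) id,
    fun x y => hinj.eq_iff.trans Quotient.eq, funext fun x => hinj.extend_apply _ _ ⟦x⟧⟩

def Str.single (r : Rel) (t : Fin (ar r) → V) : Str Rel ar V where
  interp r' := {t' | ∃ e : r = r', e ▸ t = t'}
  finite_interp _ := Set.Subsingleton.finite fun _ ⟨_, h1⟩ _ ⟨_, h2⟩ => h1.symm.trans h2
  finite_active := (Set.finite_singleton r).subset fun r' hr' => by
    obtain ⟨_, e, -⟩ := Set.nonempty_iff_ne_empty.mpr hr'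
    exact e.symm

theorem Str.subsingleton_interp_single (r : Rel) (t : Fin (ar r) → V) (r' : Rel) :
    ((Str.single r t).interp r').Subsingleton :=
  fun _ ⟨_, h1⟩ _ ⟨_, h2⟩ => h1.symm.trans h2

theorem Str.interp_single_self (r : Rel) (t : Fin (ar r) → V) :
    (Str.single r t).interp r = {t} :=
  Set.ext fun _ => ⟨fun ⟨_, he⟩ => he.symm, fun he => ⟨rfl, he.symm⟩⟩

theorem Str.interp_single_of_ne {r r' : Rel} (h : r' ≠ r) (t : Fin (ar r) → V) :
    (Str.single r t).interp r' = ∅ :=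
  Set.eq_empty_of_forall_notMem fun _ ⟨e, _⟩ => h e.symm

theorem Sat.exists_lift {S : Str Rel ar V} {sc : ℕ → V} {h : V → V} {ψ : SLR Rel ar Pr pa}
    (hsat : Sat Δ S (h ∘ sc) ψ) (hq : ψ.QPF) (heq : ∀ x y, ψ.eqOccurs x y → sc x = sc y) :
    ∃ Sc : Str Rel ar V, Sat Δ Sc sc ψ ∧ mapStr h Sc = S ∧
      ∀ r, Set.InjOn (fun t => h ∘ t) (Sc.interp r) := by
  generalize hs : h ∘ sc = s at hsat
  induction hsat with
  | emp he => exact ⟨_, .emp he, mapStr_of_empS he h, fun r => by simp [he r]⟩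
  | eq he _ =>
    exact ⟨_, .eq he (heq _ _ (Or.inl ⟨rfl, rfl⟩)), mapStr_of_empS he h, fun r => by simp [he r]⟩
  | ne he hxy =>
    refine ⟨_, .ne he fun e => hxy ?_, mapStr_of_empS he h, fun r => by simp [he r]⟩
    rw [← hs]; exact congrArg h e
  | @rel S s r a h1 h2 =>
    refine ⟨Str.single r (sc ∘ a), .rel (Str.interp_single_self _ _)
      fun r' hr' => Str.interp_single_of_ne hr' _, Str.ext' fun r' => ?_, fun r' => ?_⟩
    · by_cases hr : r' = r
      · subst hr
        rw [interp_mapStr, Str.interp_single_self, Set.image_singleton, h1, ← hs]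
        rfl
      · rw [interp_mapStr, Str.interp_single_of_ne hr, Set.image_empty, h2 r' hr]
    · exact (Str.subsingleton_interp_single _ _ r').injOn _
  | @star S1 S2 s φ ψ hdisj _ _ ih1 ih2 =>
    obtain ⟨C1, hs1, rfl, hinj1⟩ := ih1 hq.1 (fun x y h => heq x y (Or.inl h)) hs
    obtain ⟨C2, hs2, rfl, hinj2⟩ := ih2 hq.2 (fun x y h => heq x y (Or.inr h)) hs
    have hcross : ∀ r, ∀ t1 ∈ C1.interp r, ∀ t2 ∈ C2.interp r, h ∘ t1 ≠ h ∘ t2 :=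
      fun r t1 ht1 t2 ht2 he =>
        Set.eq_empty_iff_forall_notMem.mp (hdisj r) _ ⟨⟨t1, ht1, rfl⟩, ⟨t2, ht2, he.symm⟩⟩
    refine ⟨C1.comp C2, .star (fun r => Set.eq_empty_of_forall_notMem fun t ⟨ht1, ht2⟩ =>
      hcross r t ht1 t ht2 rfl) hs1 hs2, mapStr_comp _ _ _, fun r => ?_⟩
    rintro t1 (ht1 | ht1) t2 (ht2 | ht2) he
    exacts [hinj1 r ht1 ht2 he, (hcross r t1 ht1 t2 ht2 he).elim,
      (hcross r t2 ht2 t1 ht1 he.symm).elim, hinj2 r ht1 ht2 he]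
  | pred | ex => exact hq.elim

theorem mapStr_mem_intFusion {S : Str Rel ar V} {h : V → V}
    (hinj : ∀ r, Set.InjOn (fun t => h ∘ t) (S.interp r)) : mapStr h S ∈ IntFusion S := by
  refine ⟨fun u v => h u = h v, ⟨fun _ => rfl, Eq.symm, Eq.trans⟩,
    fun r t1 ht1 t2 ht2 hne => ?_, h, fun _ _ _ _ => Iff.rfl, rfl⟩
  by_contra! hall
  exact hne (hinj r ht1 ht2 (funext hall))

theorem sMod_subset_iefStarSet [Infinite V] (A : Pr) :
    SMod (V := V) Δ (natom A) ⊆ iefStarSet (Canonical (V := V) Δ (natom A)) := by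
  rintro S ⟨s, hsat⟩
  obtain ⟨χ, s', hunf, hpf, hwn, hsat'⟩ := hsat.exists_wellNamed_unfolding
  obtain ⟨sc, h, hsc, rfl⟩ := exists_canonical_store hsat'
  have hq := hpf.qpf_matrix
  obtain ⟨Sc, hSc, rfl, hinj⟩ :=
    hsat'.exists_lift hq fun x y hxy => (hsc x y).2 (hq.eqConseq_of_eqOccurs hxy)
  have hcan : Sc ∈ Canonical (V := V) Δ (natom A) :=
    ⟨_, χ, hunf, hpf, hwn, sc, fun x _ y _ hxy => (hsc x y).1 hxy, hSc, fun _ _ => Iff.rfl⟩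
  exact iefStar.intf (iefStar.base hcan) (mapStr_mem_intFusion hinj)

end Canonization

section Flattening

variable {Rel : Type} {ar : Rel → ℕ} {V : Type}

theorem Str.supp_subset_bigComp {n : ℕ} (Ss : Fin n → Str Rel ar V) (i : Fin n) :
    (Ss i).supp ⊆ (bigComp Ss).supp := by
  rw [supp_bigComp]; exact Set.subset_iUnion (fun i => (Ss i).supp) i

structure IsFlattening {n : ℕ} (Ss : Fin n → Str Rel ar V) (h : V → V) (S : Str Rel ar V) :
    Prop where
  disjoint : Pairwise fun i j => Disjoint (Ss i).supp (Ss j).supp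
  injOn : ∀ i, Set.InjOn h (Ss i).supp
  injOn_tuples : ∀ r, Set.InjOn (fun t => h ∘ t) ((bigComp Ss).interp r)
  eq_mapStr : S = mapStr h (bigComp Ss)

namespace IsFlattening

variable {n : ℕ} {Ss : Fin n → Str Rel ar V} {h : V → V} {S : Str Rel ar V}

theorem const_one (S : Str Rel ar V) : IsFlattening (fun _ : Fin 1 => S) id S where
  disjoint i j hij := (hij (Subsingleton.elim i j)).elim
  injOn _ := Set.injOn_id _
  injOn_tuples _ _ _ _ _ he := he
  eq_mapStr := by rw [bigComp_const_one, mapStr_id]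

theorem comp_mem_interp (hF : IsFlattening Ss h S) {r : Rel} {t : Fin (ar r) → V}
    (ht : t ∈ (bigComp Ss).interp r) : h ∘ t ∈ S.interp r := by
  rw [hF.eq_mapStr]; exact ⟨t, ht, rfl⟩

theorem image_supp_subset (hF : IsFlattening Ss h S) (i : Fin n) : h '' (Ss i).supp ⊆ S.supp := by
  rw [hF.eq_mapStr, supp_mapStr]; exact Set.image_mono (Str.supp_subset_bigComp Ss i)

theorem map (hF : IsFlattening Ss h S) {g : V → V} (hg : ∀ i, Set.InjOn g (h '' (Ss i).supp))
    (hgt : ∀ r, Set.InjOn (fun t => g ∘ t) (S.interp r)) :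
    IsFlattening Ss (g ∘ h) (mapStr g S) where
  disjoint := hF.disjoint
  injOn i := (hg i).comp (hF.injOn i) (Set.mapsTo_image h _)
  injOn_tuples r _ ht1 _ ht2 he :=
    hF.injOn_tuples r ht1 ht2 (hgt r (hF.comp_mem_interp ht1) (hF.comp_mem_interp ht2) he)
  eq_mapStr := by rw [hF.eq_mapStr, mapStr_mapStr]

theorem mapStr_of_injOn (hF : IsFlattening Ss h S) {g : V → V} (hg : Set.InjOn g S.supp) :
    IsFlattening Ss (g ∘ h) (mapStr g S) :=
  hF.map (fun i => hg.mono (hF.image_supp_subset i)) (injOn_tuples_of_injOn_supp hg)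

variable {n1 n2 : ℕ} {Ss1 : Fin n1 → Str Rel ar V} {Ss2 : Fin n2 → Str Rel ar V}
  {h1 h2 : V → V} {S1 S2 : Str Rel ar V}

theorem eqOn_piecewise_right (hdisj : ∀ i j, Disjoint (Ss1 i).supp (Ss2 j).supp)
    [DecidablePred (· ∈ (bigComp Ss1).supp)] :
    Set.EqOn ((bigComp Ss1).supp.piecewise h1 h2) h2 (bigComp Ss2).supp := by
  intro x hx
  refine Set.piecewise_eq_of_notMem _ _ _ fun hx1 => ?_
  rw [supp_bigComp, Set.mem_iUnion] at hx hx1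
  obtain ⟨i, hi⟩ := hx1
  obtain ⟨j, hj⟩ := hx
  exact Set.disjoint_left.mp (hdisj i j) hi hj

open scoped Classical in
theorem comp (hF1 : IsFlattening Ss1 h1 S1) (hF2 : IsFlattening Ss2 h2 S2)
    (hdisj : ∀ i j, Disjoint (Ss1 i).supp (Ss2 j).supp) (hS : Disjoint S1.supp S2.supp) :
    IsFlattening (Fin.addCases Ss1 Ss2) ((bigComp Ss1).supp.piecewise h1 h2) (S1.comp S2) := by
  set g := (bigComp Ss1).supp.piecewise h1 h2
  have hg1 : Set.EqOn g h1 (bigComp Ss1).supp := Set.piecewise_eqOn _ _ _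
  have hg2 : Set.EqOn g h2 (bigComp Ss2).supp := eqOn_piecewise_right hdisj
  have hcomp : ∀ {S' : Str Rel ar V} {f : V → V}, Set.EqOn g f S'.supp →
      ∀ {r} {t : Fin (ar r) → V}, t ∈ S'.interp r → g ∘ t = f ∘ t :=
    fun hgf _ _ ht => funext fun i => hgf (Str.mem_supp ht i)
  refine ⟨fun i j hij => ?_, fun i => ?_, fun r => ?_, ?_⟩
  · induction i using Fin.addCases <;> induction j using Fin.addCases <;>
      simp only [Fin.addCases_left, Fin.addCases_right] <;>
      first
        | exact hF1.disjoint fun e => hij (congrArg _ e)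
        | exact hF2.disjoint fun e => hij (congrArg _ e)
        | exact hdisj _ _
        | exact (hdisj _ _).symm
  · induction i using Fin.addCases with
    | left i =>
      rw [Fin.addCases_left]
      exact (hF1.injOn i).congr (hg1.mono (Str.supp_subset_bigComp Ss1 i)).symm
    | right j =>
      rw [Fin.addCases_right]
      exact (hF2.injOn j).congr (hg2.mono (Str.supp_subset_bigComp Ss2 j)).symm
  · -- a common image of a tuple of each side would have its entries in both supports
    have hcross : ∀ t1 ∈ (bigComp Ss1).interp r, ∀ t2 ∈ (bigComp Ss2).interp r,
        g ∘ t1 = g ∘ t2 → t1 = t2 := by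
      intro t1 ht1 t2 ht2 he
      rw [hcomp hg1 ht1, hcomp hg2 ht2] at he
      refine funext fun k => (Set.disjoint_left.mp hS (Str.mem_supp (hF1.comp_mem_interp ht1) k)
        ?_).elim
      rw [he]; exact Str.mem_supp (hF2.comp_mem_interp ht2) k
    rw [bigComp_addCases]
    rintro t1 (ht1 | ht1) t2 (ht2 | ht2) (he : g ∘ t1 = g ∘ t2)
    · exact hF1.injOn_tuples r ht1 ht2 (by rwa [hcomp hg1 ht1, hcomp hg1 ht2] at he)
    · exact hcross t1 ht1 t2 ht2 he
    · exact (hcross t2 ht2 t1 ht1 he.symm).symm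
    · exact hF2.injOn_tuples r ht1 ht2 (by rwa [hcomp hg2 ht1, hcomp hg2 ht2] at he)
  · rw [bigComp_addCases, mapStr_comp, mapStr_congr hg1, mapStr_congr hg2, ← hF1.eq_mapStr,
      ← hF2.eq_mapStr]

end IsFlattening

open scoped Classical in
theorem IsFlattening.fuse {n1 n2 : ℕ} {Ss1 : Fin n1 → Str Rel ar V}
    {Ss2 : Fin n2 → Str Rel ar V} {h1 h2 : V → V} {S1 S2 : Str Rel ar V}
    (hF1 : IsFlattening Ss1 h1 S1) (hF2 : IsFlattening Ss2 h2 S2)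
    (hdisj : ∀ i j, Disjoint (Ss1 i).supp (Ss2 j).supp) (hS : Disjoint S1.supp S2.supp)
    {g : V → V} (hg1 : Set.InjOn g S1.supp) (hg2 : Set.InjOn g S2.supp)
    (hgt : ∀ r, Set.InjOn (fun t => g ∘ t) ((S1.comp S2).interp r)) :
    IsFlattening (Fin.addCases Ss1 Ss2) (g ∘ (bigComp Ss1).supp.piecewise h1 h2)
      (mapStr g (S1.comp S2)) := by
  refine (hF1.comp hF2 hdisj hS).map (fun i => ?_) hgt
  induction i using Fin.addCases with
  | left i =>
    rw [Fin.addCases_left, ((Set.piecewise_eqOn _ _ _).mono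
      (Str.supp_subset_bigComp Ss1 i)).image_eq]
    exact hg1.mono (hF1.image_supp_subset i)
  | right j =>
    rw [Fin.addCases_right, ((IsFlattening.eqOn_piecewise_right hdisj).mono
      (Str.supp_subset_bigComp Ss2 j)).image_eq]
    exact hg2.mono (hF2.image_supp_subset j)

def HasFreshCopies (𝒮 : Set (Str Rel ar V)) : Prop :=
  ∀ S ∈ 𝒮, ∀ F : Set V, F.Finite →
    ∃ g : V → V, Set.InjOn g S.supp ∧ mapStr g S ∈ 𝒮 ∧ Disjoint (mapStr g S).supp F

/-- The freedom in `F` keeps the components of two fused structures apart. -/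
def IsFlatOver (𝒮 : Set (Str Rel ar V)) (S : Str Rel ar V) : Prop :=
  ∀ F : Set V, F.Finite → ∃ (n : ℕ) (Ss : Fin n → Str Rel ar V) (h : V → V),
    (∀ i, Ss i ∈ 𝒮) ∧ (∀ i, Disjoint (Ss i).supp F) ∧ IsFlattening Ss h S

variable {𝒮 : Set (Str Rel ar V)}

theorem HasFreshCopies.isFlatOver [Nonempty V] (h𝒮 : HasFreshCopies 𝒮) {S : Str Rel ar V}
    (hS : S ∈ 𝒮) : IsFlatOver 𝒮 S := by
  intro F hF
  obtain ⟨g, hg, hmem, hdisj⟩ := h𝒮 S hS F hF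
  refine ⟨1, fun _ => mapStr g S, Function.invFunOn g S.supp, fun _ => hmem, fun _ => hdisj, ?_⟩
  have hinv : Set.InjOn (Function.invFunOn g S.supp) (mapStr g S).supp := by
    rw [supp_mapStr]; exact Function.invFunOn_injOn_image g _
  simpa only [mapStr_invFunOn_mapStr hg, Function.comp_id] using
    (IsFlattening.const_one (mapStr g S)).mapStr_of_injOn hinv

theorem IsFlatOver.of_isoCopy {S S' : Str Rel ar V} (hS : IsFlatOver 𝒮 S)
    (hiso : IsoCopy S S') : IsFlatOver 𝒮 S' := by
  obtain ⟨g, hg, rfl⟩ := hiso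
  intro F hF
  obtain ⟨n, Ss, h, hmem, hdisj, hflat⟩ := hS F hF
  exact ⟨n, Ss, g ∘ h, hmem, hdisj, hflat.mapStr_of_injOn hg⟩

theorem EqvOf.eq_or_mem_of_isMatching {M : Set (V × V)} (hM : IsMatching M) {x y : V}
    (h : EqvOf (fun a b => (a, b) ∈ M) x y) : x = y ∨ (x, y) ∈ M ∨ (y, x) ∈ M := by
  have hshare : ∀ {a b c d : V}, (a, b) ∈ M → (c, d) ∈ M →
      (a = c ∨ a = d ∨ b = c ∨ b = d) → a = c ∧ b = d := by
    intro a b c d h1 h2 hsh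
    by_contra hne
    have hempty := Set.eq_empty_iff_forall_notMem.mp (hM _ h1 _ h2 fun e => hne (Prod.mk.inj e))
    rcases hsh with rfl | rfl | rfl | rfl
    exacts [hempty a ⟨Or.inl rfl, Or.inl rfl⟩, hempty a ⟨Or.inl rfl, Or.inr rfl⟩,
      hempty b ⟨Or.inr rfl, Or.inl rfl⟩, hempty b ⟨Or.inr rfl, Or.inr rfl⟩]
  have hE : Equivalence fun a b : V => a = b ∨ (a, b) ∈ M ∨ (b, a) ∈ M := by
    constructor
    · exact fun _ => Or.inl rfl
    · rintro a b (rfl | hab | hba)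
      exacts [Or.inl rfl, Or.inr (Or.inr hab), Or.inr (Or.inl hba)]
    · rintro a b c (rfl | hab | hba) hbc
      · exact hbc
      · rcases hbc with rfl | hbc | hcb
        · exact Or.inr (Or.inl hab)
        · obtain ⟨rfl, rfl⟩ := hshare hab hbc (Or.inr (Or.inr (Or.inl rfl))); exact Or.inl rfl
        · exact Or.inl (hshare hab hcb (Or.inr (Or.inr (Or.inr rfl)))).1
      · rcases hbc with rfl | hbc | hcb
        · exact Or.inr (Or.inr hba)
        · exact Or.inl (hshare hba hbc (Or.inl rfl)).2
        · obtain ⟨rfl, rfl⟩ := hshare hba hcb (Or.inr (Or.inl rfl)); exact Or.inl rfl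
  exact h _ hE fun _ _ hab => Or.inr (Or.inl hab)

theorem injOn_of_eqvOf_isMatching {M : Set (V × V)} {A B : Set V} {h : V → V}
    (hM : IsMatching M) (hMAB : ∀ p ∈ M, p.1 ∈ A ∧ p.2 ∈ B) (hAB : Disjoint A B)
    (hh : ∀ u ∈ A ∪ B, ∀ v ∈ A ∪ B, EqvOf (fun a b => (a, b) ∈ M) u v ↔ h u = h v) :
    Set.InjOn h A ∧ Set.InjOn h B := by
  have key : ∀ u ∈ A ∪ B, ∀ v ∈ A ∪ B, h u = h v → u = v ∨ (u ∈ A ∧ v ∈ B) ∨ (v ∈ A ∧ u ∈ B) :=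
    fun u hu v hv huv => ((hh u hu v hv).mpr huv).eq_or_mem_of_isMatching hM |>.imp_right
      (Or.imp (hMAB _) (hMAB _))
  refine ⟨fun u hu v hv huv => ?_, fun u hu v hv huv => ?_⟩
  · rcases key u (Or.inl hu) v (Or.inl hv) huv with e | ⟨-, hv'⟩ | ⟨-, hu'⟩
    exacts [e, (Set.disjoint_left.mp hAB hv hv').elim, (Set.disjoint_left.mp hAB hu hu').elim]
  · rcases key u (Or.inr hu) v (Or.inr hv) huv with e | ⟨hu', -⟩ | ⟨hv', -⟩
    exacts [e, (Set.disjoint_left.mp hAB hu' hu).elim, (Set.disjoint_left.mp hAB hv' hv).elim]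

theorem injOn_tuples_of_compatibleE {S : Str Rel ar V} {E : V → V → Prop} {h : V → V}
    (hc : CompatibleE S E) (hh : ∀ u ∈ S.supp, ∀ v ∈ S.supp, E u v ↔ h u = h v) (r : Rel) :
    Set.InjOn (fun t => h ∘ t) (S.interp r) := fun t1 ht1 t2 ht2 he => by
  by_contra hne
  obtain ⟨i, hi⟩ := hc r t1 ht1 t2 ht2 hne
  exact hi ((hh _ (Str.mem_supp ht1 i) _ (Str.mem_supp ht2 i)).mpr (congrFun he i))

theorem IsFlatOver.of_extFusion {S1 S2 S : Str Rel ar V} (h1 : IsFlatOver 𝒮 S1)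
    (h2 : IsFlatOver 𝒮 S2) (hS : S ∈ ExtFusion S1 S2) : IsFlatOver 𝒮 S := by
  obtain ⟨S1', S2', M, hiso1, hiso2, hdisj, -, hM, hMsupp, hcompat, g, hg, rfl⟩ := hS
  have hdisj' : Disjoint S1'.supp S2'.supp := Set.disjoint_iff_inter_eq_empty.mpr hdisj
  obtain ⟨hinj1, hinj2⟩ := injOn_of_eqvOf_isMatching hM hMsupp hdisj' (supp_comp S1' S2' ▸ hg)
  intro F hF
  obtain ⟨n1, Ss1, h1, hmem1, hF1, hflat1⟩ := h1.of_isoCopy hiso1 F hF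
  obtain ⟨n2, Ss2, h2, hmem2, hF2, hflat2⟩ :=
    h2.of_isoCopy hiso2 (F ∪ (bigComp Ss1).supp) (hF.union (bigComp Ss1).supp_finite)
  have hdisjSs : ∀ i j, Disjoint (Ss1 i).supp (Ss2 j).supp := fun i j =>
    ((hF2 j).mono_right ((Str.supp_subset_bigComp Ss1 i).trans Set.subset_union_right)).symm
  refine ⟨n1 + n2, Fin.addCases Ss1 Ss2, _, fun i => ?_, fun i => ?_,
    hflat1.fuse hflat2 hdisjSs hdisj' hinj1 hinj2 (injOn_tuples_of_compatibleE hcompat hg)⟩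
  · induction i using Fin.addCases <;> simp only [Fin.addCases_left, Fin.addCases_right]
    exacts [hmem1 _, hmem2 _]
  · induction i using Fin.addCases <;> simp only [Fin.addCases_left, Fin.addCases_right]
    exacts [hF1 _, (hF2 _).mono_right Set.subset_union_left]

theorem efStar.isFlatOver [Nonempty V] (h𝒮 : HasFreshCopies 𝒮) {S : Str Rel ar V}
    (h : efStar 𝒮 S) : IsFlatOver 𝒮 S := by
  induction h with
  | base hS => exact h𝒮.isFlatOver hS
  | iso _ hiso ih => exact ih.of_isoCopy hiso
  | fuse _ _ hS ih1 ih2 => exact ih1.of_extFusion ih2 hS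

end Flattening

section Expansion

variable {Rel : Type} {ar : Rel → ℕ} {V : Type} {Pr : Type} {pa : Pr → ℕ}
  {Δ : SID Rel ar Pr pa}

theorem canonical_hasFreshCopies [Infinite V] (φ : SLR Rel ar Pr pa) :
    HasFreshCopies (Canonical (V := V) Δ φ) := by
  rintro S ⟨d, χ, hunf, hpf, hwn, s, hcs, hsat, -⟩ F hF
  obtain ⟨g, hg, hgF⟩ := exists_injOn_disjoint_image
    ((χ.matrix.fv_finite.image s).union S.supp_finite).countable hF
  have hq := hpf.qpf_matrix
  have hgS : Set.InjOn g S.supp := hg.mono Set.subset_union_right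
  refine ⟨g, hgS, ⟨_, χ, hunf, hpf, hwn, g ∘ s, fun x hx y hy hxy => ?_,
    hsat.map hq (fun x y hocc he => ?_) (injOn_tuples_of_injOn_supp hgS), fun _ _ => Iff.rfl⟩, ?_⟩
  · exact hcs x hx y hy (hg (Or.inl ⟨x, hx, rfl⟩) (Or.inl ⟨y, hy, rfl⟩) hxy)
  · have hfv := hq.mem_fv_of_neOccurs hocc
    exact hsat.ne_of_neOccurs hq hocc (hg (Or.inl ⟨x, hfv.1, rfl⟩) (Or.inl ⟨y, hfv.2, rfl⟩) he)
  · rw [supp_mapStr]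
    exact hgF.mono_left (Set.image_mono Set.subset_union_right)

namespace RichCanonical

variable {φ : SLR Rel ar Pr pa} {S : Str Rel ar V} {d : V → V → Prop}

theorem symm (h : RichCanonical Δ φ S d) {u v : V} (huv : d u v) : d v u := by
  obtain ⟨χ, -, -, -, s, -, -, hd⟩ := h
  obtain ⟨x, y, rfl, rfl, hxy⟩ := (hd u v).mp huv
  exact (hd _ _).mpr ⟨y, x, rfl, rfl, SLR.neOccurs_symm hxy⟩

theorem ne (h : RichCanonical Δ φ S d) {u v : V} (huv : d u v) : u ≠ v := by
  obtain ⟨χ, -, hpf, -, s, -, hsat, hd⟩ := h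
  obtain ⟨x, y, rfl, rfl, hxy⟩ := (hd u v).mp huv
  exact hsat.ne_of_neOccurs hpf.qpf_matrix hxy

theorem finite_dom (h : RichCanonical Δ φ S d) : {u | ∃ v, d u v}.Finite := by
  obtain ⟨χ, -, hpf, -, s, -, -, hd⟩ := h
  refine (χ.matrix.fv_finite.image s).subset ?_
  rintro u ⟨v, huv⟩
  obtain ⟨x, y, rfl, -, hxy⟩ := (hd u v).mp huv
  exact ⟨x, (hpf.qpf_matrix.mem_fv_of_neOccurs hxy).1, rfl⟩

theorem mapStr_mem_sMod (h : RichCanonical Δ φ S d) {g : V → V}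
    (hd : ∀ u v, d u v → g u ≠ g v) (hinj : ∀ r, Set.InjOn (fun t => g ∘ t) (S.interp r)) :
    mapStr g S ∈ SMod (V := V) Δ φ := by
  obtain ⟨χ, hunf, hpf, -, s, -, hsat, hds⟩ := h
  exact ⟨g ∘ s, hunf.sat (hsat.map hpf.qpf_matrix
    (fun x y hxy => hd _ _ ((hds _ _).mpr ⟨x, y, rfl, rfl, hxy⟩)) hinj).of_matrix⟩

end RichCanonical

theorem Substr.interp_subset {S1 S2 : Str Rel ar V} (h : Substr S1 S2) (r : Rel) :
    S1.interp r ⊆ S2.interp r := by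
  rw [h r]; exact Set.sep_subset _ _

theorem exists_eqOn_and_eq_or_mem_of_eq [Infinite V] {A P : Set V} (hA : A.Finite)
    (hP : P.Finite) (h : V → V) : ∃ g : V → V, Set.EqOn g h A ∧
      ∀ u ∈ P, ∀ v ∈ P, g u = g v → u = v ∨ (u ∈ A ∧ v ∈ A) := by
  classical
  obtain ⟨j, hj, hjA⟩ := exists_injOn_disjoint_image (hP.sdiff (t := A)).countable (hA.image h)
  refine ⟨A.piecewise h j, Set.piecewise_eqOn _ _ _, fun u hu v hv huv => ?_⟩
  by_cases huA : u ∈ A <;> by_cases hvA : v ∈ A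
  · exact Or.inr ⟨huA, hvA⟩
  · rw [Set.piecewise_eq_of_mem _ _ _ huA, Set.piecewise_eq_of_notMem _ _ _ hvA] at huv
    exact (Set.disjoint_left.mp hjA ⟨v, ⟨hv, hvA⟩, rfl⟩ ⟨u, huA, huv⟩).elim
  · rw [Set.piecewise_eq_of_notMem _ _ _ huA, Set.piecewise_eq_of_mem _ _ _ hvA] at huv
    exact (Set.disjoint_left.mp hjA ⟨u, ⟨hu, huA⟩, rfl⟩ ⟨v, hvA, huv.symm⟩).elim
  · rw [Set.piecewise_eq_of_notMem _ _ _ huA, Set.piecewise_eq_of_notMem _ _ _ hvA] at huv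
    exact Or.inl (hj ⟨hu, huA⟩ ⟨hv, hvA⟩ huv)

theorem IsFlattening.exists_extension [Infinite V] {n : ℕ} {Ss : Fin n → Str Rel ar V}
    {h : V → V} {S : Str Rel ar V} (hF : IsFlattening Ss h S) {P : Set V} (hP : P.Finite) :
    ∃ g : V → V, Set.EqOn g h (bigComp Ss).supp ∧ ∀ u ∈ P, ∀ v ∈ P, g u = g v → u ≠ v →
      u ∈ (bigComp Ss).supp ∧ v ∈ (bigComp Ss).supp ∧ ∃ i j, i < j ∧
        (u ∈ (Ss i).supp ∧ v ∈ (Ss j).supp ∨ v ∈ (Ss i).supp ∧ u ∈ (Ss j).supp) := by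
  obtain ⟨g, hgh, hg⟩ := exists_eqOn_and_eq_or_mem_of_eq (bigComp Ss).supp_finite hP h
  refine ⟨g, hgh, fun u hu v hv huv hne => ?_⟩
  obtain ⟨huB, hvB⟩ := (hg u hu v hv huv).resolve_left hne
  refine ⟨huB, hvB, ?_⟩
  rw [supp_bigComp, Set.mem_iUnion] at huB hvB
  obtain ⟨i, hi⟩ := huB
  obtain ⟨j, hj⟩ := hvB
  rcases lt_trichotomy i j with hij | rfl | hij
  exacts [⟨i, j, hij, Or.inl ⟨hi, hj⟩⟩,
    (hne (hF.injOn i hi hj (by rwa [hgh (Str.supp_subset_bigComp Ss i hi),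
      hgh (Str.supp_subset_bigComp Ss i hj)] at huv))).elim,
    ⟨j, i, hij, Or.inr ⟨hj, hi⟩⟩]

/-- Map the rich canonical model by the flattening map on the components and injectively to fresh
elements elsewhere: since no disequality and no pair of overlapping tuples connects two
components, this keeps the disequalities and merges no tuples. -/
theorem IsFlattening.exists_mem_sMod_superset [Infinite V] {n : ℕ} {Ss : Fin n → Str Rel ar V}
    {h : V → V} {S : Str Rel ar V} (hF : IsFlattening Ss h S) {φ : SLR Rel ar Pr pa}
    {Sh : Str Rel ar V} {d : V → V → Prop} (hrc : RichCanonical Δ φ Sh d)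
    (hsub : Substr (bigComp Ss) Sh)
    (hd : ∀ i j : Fin n, i < j → ∀ u ∈ (Ss i).supp, ∀ v ∈ (Ss j).supp, ¬ d u v)
    (htouch : ¬ ∃ (r : Rel) (t1 t2 : Fin (ar r) → V) (i j : Fin n),
      t1 ∈ Sh.interp r ∧ t2 ∈ Sh.interp r ∧ i < j ∧
      (∃ k, t1 k ∈ (Ss i).supp) ∧ (∃ k, t2 k ∈ (Ss j).supp) ∧ ∃ k l, t1 k = t2 l) :
    ∃ T ∈ SMod (V := V) Δ φ, ∀ r, S.interp r ⊆ T.interp r := by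
  obtain ⟨g, hgh, hcross⟩ := hF.exists_extension (Sh.supp_finite.union hrc.finite_dom)
  have hdg : ∀ u v, d u v → g u ≠ g v := by
    intro u v huv he
    obtain ⟨-, -, i, j, hij, h | h⟩ :=
      hcross u (Or.inr ⟨v, huv⟩) v (Or.inr ⟨u, hrc.symm huv⟩) he (hrc.ne huv)
    exacts [hd i j hij u h.1 v h.2 huv, hd i j hij v h.1 u h.2 (hrc.symm huv)]
  have hgt : ∀ r, Set.InjOn (fun t => g ∘ t) (Sh.interp r) := by
    intro r t1 ht1 t2 ht2 (he : g ∘ t1 = g ∘ t2)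
    by_contra hne
    obtain ⟨k, hk⟩ := Function.ne_iff.mp hne
    obtain ⟨-, -, i, j, hij, hk'⟩ := hcross _ (Or.inl (Str.mem_supp ht1 k)) _
      (Or.inl (Str.mem_supp ht2 k)) (congrFun he k) hk
    by_cases hshare : ∃ k l, t1 k = t2 l
    · refine htouch ?_
      rcases hk' with hk' | hk'
      · exact ⟨r, t1, t2, i, j, ht1, ht2, hij, ⟨k, hk'.1⟩, ⟨k, hk'.2⟩, hshare⟩
      · obtain ⟨k1, k2, e⟩ := hshare
        exact ⟨r, t2, t1, i, j, ht2, ht1, hij, ⟨k, hk'.1⟩, ⟨k, hk'.2⟩, k2, k1, e.symm⟩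
    -- two tuples without common element are tuples of the composition, which `h` does not merge
    push Not at hshare
    have hall : ∀ l, t1 l ∈ (bigComp Ss).supp ∧ t2 l ∈ (bigComp Ss).supp := fun l =>
      (hcross _ (Or.inl (Str.mem_supp ht1 l)) _ (Or.inl (Str.mem_supp ht2 l))
        (congrFun he l) (hshare l l)).imp_right And.left
    refine hne (hF.injOn_tuples r ?_ ?_ (funext fun l => ?_))
    · rw [hsub r]; exact ⟨ht1, fun l => (hall l).1⟩
    · rw [hsub r]; exact ⟨ht2, fun l => (hall l).2⟩
    · exact (hgh (hall l).1).symm.trans ((congrFun he l).trans (hgh (hall l).2))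
  refine ⟨mapStr g Sh, hrc.mapStr_mem_sMod hdg hgt, fun r => ?_⟩
  rw [hF.eq_mapStr, ← mapStr_congr hgh]
  exact Set.image_mono (hsub.interp_subset r)

theorem tw_le_of_mem_efStarSet [Infinite V] {A : Pr} (hexp : Expandable (V := V) Δ A) {k : ℕ}
    (hk : ∀ T ∈ SMod (V := V) Δ (natom A), tw T ≤ k) {S : Str Rel ar V}
    (hS : S ∈ efStarSet (Canonical (V := V) Δ (natom A))) : tw S ≤ k := by
  obtain ⟨n, Ss, h, hC, -, hF⟩ :=
    efStar.isFlatOver (canonical_hasFreshCopies _) hS ∅ Set.finite_empty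
  obtain ⟨Sh, d, hrc, hsub, hd, htouch⟩ :=
    hexp n Ss hC fun i j hij => Set.disjoint_iff_inter_eq_empty.mp (hF.disjoint hij)
  obtain ⟨T, hT, hST⟩ := hF.exists_mem_sMod_superset hrc hsub hd htouch
  exact (tw_mono hST).trans (hk T hT)

end Expansion

theorem expandable_fusion_twb_general
    (Rel : Type) (ar : Rel → ℕ)
    (V : Type) [Infinite V] (Pr : Type) (pa : Pr → ℕ)
    (Δ : SID Rel ar Pr pa) (A : Pr) (hexp : Expandable (V := V) Δ A) :
    (TWB (iefStarSet (Canonical (V := V) Δ (natom A))) →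
      TWB (SMod (V := V) Δ (natom A))) ∧
    (TWB (SMod (V := V) Δ (natom A)) →
      TWB (efStarSet (Canonical (V := V) Δ (natom A)))) := by
  constructor
  · rintro ⟨k, hk⟩
    exact ⟨k, fun S hS => hk S (sMod_subset_iefStarSet A hS)⟩
  · rintro ⟨k, hk⟩
    exact ⟨k, fun S hS => tw_le_of_mem_efStarSet hexp hk hS⟩

/-- Lemma 3.10: for an expandable SID, treewidth boundedness of the
closure of the canonical models under internal and external fusions implies that of
the set of models, which implies treewidth boundedness of the closure of the canonical
models under external fusions. -/
theorem expandable_fusion_twb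
    (Rel : Type) [Fintype Rel] (ar : Rel → ℕ) (har : ∀ r, 1 ≤ ar r)
    (V : Type) [Infinite V] (Pr : Type) (pa : Pr → ℕ)
    (Δ : SID Rel ar Pr pa) (A : Pr) (hA : pa A = 0) (hexp : Expandable (V := V) Δ A) :
    (TWB (iefStarSet (Canonical (V := V) Δ (natom A))) →
      TWB (SMod (V := V) Δ (natom A))) ∧
    (TWB (SMod (V := V) Δ (natom A)) →
      TWB (efStarSet (Canonical (V := V) Δ (natom A)))) :=
  expandable_fusion_twb_general Rel ar V Pr pa Δ A hexp

end SLRTW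
end
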